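/- arXiv:2505.02459 — 2 statements merged into one kernel-verified Lean document; each statement's English description precedes it below -/
import Mathlib

section
/- Let (W,S) be a Coxeter system, r,t ∈ S with rt of order m ≥ 3, and w ∈ W with rw > w and tw > w. Then the m−1 elements rw, trw, rtrw, ... (alternating left multiplications starting with r) are pairwise distinct and have strictly increasing lengths ℓ(w)+1, ℓ(w)+2, ..., ℓ(w)+m−1. -/
open CoxeterSystem List

attribute [local instance] Classical.propDecidable

set_option linter.unusedSectionVars false

namespace AltString

variable {B W : Type*} [Group W] {M : CoxeterMatrix B} (cs : CoxeterSystem M W)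

local prefix:100 "s" => cs.simple
local prefix:100 "π" => cs.wordProd
local prefix:100 "ℓ" => cs.length

/-- Parity count of occurrences of `t` in a list. -/
noncomputable def cnt (t : W) : List W → ZMod 2
  | [] => 0
  | a :: l => (if a = t then 1 else 0) + cnt t l

variable {cs}

@[simp] lemma cnt_nil (t : W) : cnt t ([] : List W) = 0 := rfl

lemma cnt_cons (t a : W) (l : List W) :
    cnt t (a :: l) = (if a = t then 1 else 0) + cnt t l := rfl

lemma cnt_append (t : W) (l₁ l₂ : List W) :
    cnt t (l₁ ++ l₂) = cnt t l₁ + cnt t l₂ := by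
  induction l₁ with
  | nil => simp
  | cons a l ih => simp [cnt_cons, ih, add_assoc]

lemma mem_of_cnt_ne_zero {t : W} {l : List W} (h : cnt t l ≠ 0) : t ∈ l := by
  induction l with
  | nil => simp at h
  | cons a l ih =>
    rw [cnt_cons] at h
    by_cases ha : a = t
    · exact ha ▸ List.mem_cons_self (a := a) (l := l)
    · simp only [ha, if_false, zero_add] at h
      exact List.mem_cons_of_mem _ (ih h)

lemma zmod2_cases : ∀ x : ZMod 2, x = 0 ∨ x = 1 := by decide

lemma cnt_map_cond {t t' : W} {ψ : W → W} (hψ : ∀ r, ψ r = t ↔ r = t') (l : List W) :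
    cnt t (l.map ψ) = cnt t' l := by
  induction l with
  | nil => simp
  | cons a l ih => simp [cnt_cons, ih, hψ a]

end AltString

namespace AltString

variable {B W : Type*} [Group W] {M : CoxeterMatrix B} (cs : CoxeterSystem M W)

local prefix:100 "s" => cs.simple
local prefix:100 "π" => cs.wordProd
local prefix:100 "ℓ" => cs.length

/-! ### The parity representation on `W × ZMod 2` -/

noncomputable def eFun (a : B) : W × ZMod 2 → W × ZMod 2 :=
  fun p => (s a * p.1 * s a, p.2 + (if p.1 = s a then 1 else 0))

lemma zmod2_add_self (y : ZMod 2) : y + y = 0 := by revert y; decide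

lemma eFun_invol (a : B) : Function.Involutive (eFun cs a) := by
  intro p
  obtain ⟨t, x⟩ := p
  unfold eFun
  simp only
  rw [Prod.mk.injEq]
  constructor
  · show s a * (s a * t * s a) * s a = t
    calc s a * (s a * t * s a) * s a = (s a * s a) * t * (s a * s a) := by group
    _ = t := by rw [cs.simple_mul_simple_self]; group
  · show (x + (if t = s a then 1 else 0)) + (if s a * t * s a = s a then 1 else 0) = x
    have : (s a * t * s a = s a) ↔ (t = s a) := by
      constructor
      · intro h
        have h2 : (s a * t) * s a = 1 * s a := by rw [one_mul]; exact h
        have h3 := mul_right_cancel h2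
        have h4 : (s a)⁻¹ = t := inv_eq_of_mul_eq_one_right h3
        rw [← h4, cs.inv_simple]
      · intro h; rw [h, cs.simple_mul_simple_self, one_mul]
    rw [if_congr this rfl rfl, add_assoc, zmod2_add_self, add_zero]

noncomputable def ePerm (a : B) : Equiv.Perm (W × ZMod 2) :=
  (eFun_invol cs a).toPerm

lemma ePerm_apply (a : B) (p : W × ZMod 2) : ePerm cs a p = eFun cs a p := rfl

end AltString

namespace AltString

lemma invol_conj_pow {G : Type*} [Group G] {z v : G} (hv : v * v = 1) (hc : v * z * v = z⁻¹) :
    ∀ j : ℕ, v * z ^ j = (z ^ j)⁻¹ * v := by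
  intro j; induction j with
  | zero => simp
  | succ n ih =>
    calc v * z ^ (n+1) = (v * z ^ n) * z := by rw [pow_succ]; group
    _ = (z ^ n)⁻¹ * (v * z) := by rw [ih]; group
    _ = (z ^ n)⁻¹ * (v * z * (v * v)) := by rw [hv]; group
    _ = (z ^ n)⁻¹ * ((v * z * v) * v) := by group
    _ = (z ^ n)⁻¹ * (z⁻¹ * v) := by rw [hc]
    _ = (z ^ (n+1))⁻¹ * v := by rw [pow_succ]; group

lemma conj_eq_iff {G : Type*} [Group G] (g t v : G) : g * t * g⁻¹ = v ↔ t = g⁻¹ * v * g := by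
  constructor
  · intro h; rw [← h]; group
  · intro h; rw [h]; group

variable {B W : Type*} [Group W] {M : CoxeterMatrix B} (cs : CoxeterSystem M W)

local prefix:100 "s" => cs.simple
local prefix:100 "π" => cs.wordProd
local prefix:100 "ℓ" => cs.length

lemma simple_conj_iff (b : B) (x y : W) : s b * x * s b = y ↔ x = s b * y * s b := by
  have hv : s b * s b = 1 := cs.simple_mul_simple_self b
  constructor
  · intro h
    calc x = (s b * s b) * x * (s b * s b) := by rw [hv, one_mul, mul_one]
    _ = s b * (s b * x * s b) * s b := by group
    _ = s b * y * s b := by rw [h]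
  · intro h
    rw [h]
    calc s b * (s b * y * s b) * s b = (s b * s b) * y * (s b * s b) := by group
    _ = y := by rw [hv, one_mul, mul_one]

lemma ePerm_mul_pow_apply (a b : B) (n : ℕ) (t : W) (x : ZMod 2) :
    ((ePerm cs a * ePerm cs b) ^ n) (t, x) =
      ((s a * s b) ^ n * t * ((s a * s b) ^ n)⁻¹,
        x + ∑ c ∈ Finset.range (2 * n),
          (if t = ((s a * s b) ^ c)⁻¹ * s b then 1 else 0)) := by
  have hv : s b * s b = 1 := cs.simple_mul_simple_self b
  have hc : s b * (s a * s b) * s b = (s a * s b)⁻¹ := by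
    rw [mul_inv_rev, cs.inv_simple, cs.inv_simple]
    calc s b * (s a * s b) * s b = s b * s a * (s b * s b) := by group
    _ = (s b)⁻¹ * (s a)⁻¹ * ((s b)⁻¹ * (s b)⁻¹) := by rw [cs.inv_simple, cs.inv_simple]
    _ = _ := by rw [cs.inv_simple, cs.inv_simple, hv]; group
  set z := s a * s b with hz
  have hcomm : ∀ j : ℕ, s b * z ^ j = (z ^ j)⁻¹ * s b := invol_conj_pow hv hc
  induction n generalizing x with
  | zero => simp
  | succ n ih =>
    have hstep : ∀ (u : W) (y : ZMod 2), (ePerm cs a * ePerm cs b) (u, y) =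
        (z * u * z⁻¹, y + (if u = s b then 1 else 0) + (if u = z⁻¹ * s b then 1 else 0)) := by
      intro u y
      rw [Equiv.Perm.mul_apply, ePerm_apply, ePerm_apply]
      unfold eFun
      simp only
      rw [Prod.mk.injEq]
      constructor
      · show s a * (s b * u * s b) * s a = z * u * z⁻¹
        rw [hz, mul_inv_rev, cs.inv_simple, cs.inv_simple]; group
      · show (y + (if u = s b then 1 else 0)) + (if s b * u * s b = s a then 1 else 0) = _
        congr 1
        have hzb : z⁻¹ * s b = s b * s a * s b := by
          rw [hz, mul_inv_rev, cs.inv_simple, cs.inv_simple]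
        have hiff : (s b * u * s b = s a) ↔ (u = z⁻¹ * s b) := by
          rw [simple_conj_iff, hzb]
        rw [if_congr hiff rfl rfl]
    have hpow : (ePerm cs a * ePerm cs b) ^ (n + 1) =
        (ePerm cs a * ePerm cs b) * (ePerm cs a * ePerm cs b) ^ n := by
      rw [pow_succ']
    have hsb2n : (z ^ n)⁻¹ * s b * z ^ n = (z ^ (2*n))⁻¹ * s b := by
      calc (z ^ n)⁻¹ * s b * z ^ n = (z ^ n)⁻¹ * (s b * z ^ n) := by group
      _ = (z ^ n)⁻¹ * ((z ^ n)⁻¹ * s b) := by rw [hcomm n]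
      _ = (z ^ (2*n))⁻¹ * s b := by rw [two_mul, pow_add]; group
    have hsb2n1 : (z ^ n)⁻¹ * (z⁻¹ * s b) * z ^ n = (z ^ (2*n+1))⁻¹ * s b := by
      calc (z ^ n)⁻¹ * (z⁻¹ * s b) * z ^ n = (z ^ n)⁻¹ * z⁻¹ * (s b * z ^ n) := by group
      _ = (z ^ n)⁻¹ * z⁻¹ * ((z ^ n)⁻¹ * s b) := by rw [hcomm n]
      _ = (z ^ (2*n+1))⁻¹ * s b := by rw [pow_succ, two_mul, pow_add]; group
    rw [hpow, Equiv.Perm.mul_apply, ih, hstep]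
    rw [Prod.mk.injEq]
    constructor
    · rw [pow_succ']; group
    · have e1 : (z ^ n * t * (z ^ n)⁻¹ = s b) ↔ (t = (z ^ (2 * n))⁻¹ * s b) := by
        rw [conj_eq_iff, hsb2n]
      have e2 : (z ^ n * t * (z ^ n)⁻¹ = z⁻¹ * s b) ↔ (t = (z ^ (2 * n + 1))⁻¹ * s b) := by
        rw [conj_eq_iff, hsb2n1]
      rw [if_congr e1 rfl rfl, if_congr e2 rfl rfl]
      rw [show 2 * (n + 1) = (2 * n) + 1 + 1 by ring]
      rw [Finset.sum_range_succ, Finset.sum_range_succ]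
      ring

lemma e_liftable : M.IsLiftable (ePerm cs) := by
  intro a b
  apply Equiv.ext
  rintro ⟨t, x⟩
  rw [ePerm_mul_pow_apply, Equiv.Perm.one_apply]
  have hz : (s a * s b) ^ M.M a b = 1 := cs.simple_mul_simple_pow a b
  rw [Prod.mk.injEq]
  constructor
  · rw [hz]; group
  · have hsum : ∑ c ∈ Finset.range (2 * M.M a b),
        (if t = ((s a * s b) ^ c)⁻¹ * s b then (1 : ZMod 2) else 0) = 0 := by
      rw [two_mul, Finset.sum_range_add]
      have : ∀ c : ℕ, ((s a * s b) ^ (M.M a b + c) : W) = (s a * s b) ^ c := by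
        intro c; rw [pow_add, hz, one_mul]
      have h2 : ∑ c ∈ Finset.range (M.M a b),
          (if t = ((s a * s b) ^ (M.M a b + c))⁻¹ * s b then (1 : ZMod 2) else 0) =
          ∑ c ∈ Finset.range (M.M a b),
          (if t = ((s a * s b) ^ c)⁻¹ * s b then (1 : ZMod 2) else 0) :=
        Finset.sum_congr rfl (fun c _ => by rw [this c])
      rw [h2]
      exact zmod2_add_self _
    rw [hsum, add_zero]

end AltString

namespace AltString

variable {B W : Type*} [Group W] {M : CoxeterMatrix B} (cs : CoxeterSystem M W)

local prefix:100 "s" => cs.simple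
local prefix:100 "π" => cs.wordProd
local prefix:100 "ℓ" => cs.length

noncomputable def phi : W →* Equiv.Perm (W × ZMod 2) :=
  cs.lift ⟨ePerm cs, e_liftable cs⟩

lemma phi_simple (a : B) : phi cs (s a) = ePerm cs a :=
  cs.lift_apply_simple (e_liftable cs) a

lemma rightInvSeq_cons (a : B) (ω : List B) :
    cs.rightInvSeq (a :: ω) = ((π ω)⁻¹ * s a * π ω) :: cs.rightInvSeq ω := rfl

lemma phi_wordProd (ω : List B) (t : W) (x : ZMod 2) :
    (phi cs (π ω)) (t, x) = (π ω * t * (π ω)⁻¹, x + cnt t (cs.rightInvSeq ω)) := by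
  induction ω generalizing x with
  | nil => simp [cnt]
  | cons a ω ih =>
    rw [cs.wordProd_cons, map_mul, Equiv.Perm.mul_apply, ih, phi_simple, ePerm_apply]
    unfold eFun
    simp only
    rw [Prod.mk.injEq]
    constructor
    · show s a * (π ω * t * (π ω)⁻¹) * s a = (s a * π ω) * t * (s a * π ω)⁻¹
      rw [mul_inv_rev, cs.inv_simple]; group
    · show (x + cnt t (cs.rightInvSeq ω)) + (if π ω * t * (π ω)⁻¹ = s a then 1 else 0) = _
      rw [rightInvSeq_cons, cnt_cons]
      have hiff : ((π ω)⁻¹ * s a * π ω = t) ↔ (π ω * t * (π ω)⁻¹ = s a) := by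
        constructor
        · intro h; rw [← h]; group
        · intro h; rw [← h]; group
      rw [if_congr hiff rfl rfl]
      ring

/-- `η w t`: the parity of the number of times `t` occurs in the (right) inversion
sequence of any word for `w`. -/
noncomputable def eta (w t : W) : ZMod 2 := ((phi cs w) (t, 0)).2

lemma eta_eq_cnt (ω : List B) (t : W) : eta cs (π ω) t = cnt t (cs.rightInvSeq ω) := by
  unfold eta
  rw [phi_wordProd]
  simp

lemma cnt_ris_word_invariant {ω ω' : List B} (h : π ω = π ω') (t : W) :
    cnt t (cs.rightInvSeq ω) = cnt t (cs.rightInvSeq ω') := by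
  rw [← eta_eq_cnt, ← eta_eq_cnt, h]

lemma wordProd_palindrome (γ : List B) (c : B) :
    π (γ ++ c :: γ.reverse) = π γ * s c * (π γ)⁻¹ := by
  rw [cs.wordProd_append, cs.wordProd_cons, cs.wordProd_reverse]
  group

lemma cnt_ris_palindrome : ∀ (γ : List B) (c : B),
    cnt (π γ * s c * (π γ)⁻¹) (cs.rightInvSeq (γ ++ c :: γ.reverse)) = 1 := by
  intro γ
  induction γ with
  | nil =>
    intro c
    simp [cs.rightInvSeq_singleton, cnt_cons, cnt]
  | cons a γ' ih =>
    intro c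
    set τ' := γ' ++ c :: γ'.reverse with hτ'
    set t' := π γ' * s c * (π γ')⁻¹ with ht'
    have hπτ' : π τ' = t' := wordProd_palindrome cs γ' c
    have ht'inv : t'⁻¹ = t' := by
      rw [ht', mul_inv_rev, mul_inv_rev, inv_inv, cs.inv_simple]; group
    have hw : (a :: γ') ++ c :: (a :: γ').reverse = a :: (τ' ++ [a]) := by
      simp [hτ', List.reverse_cons, List.append_assoc]
    have hT : π (a :: γ') * s c * (π (a :: γ'))⁻¹ = s a * t' * s a := by
      rw [cs.wordProd_cons, mul_inv_rev, cs.inv_simple, ht']; group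
    rw [hw, hT]
    have hπτa : π (τ' ++ [a]) = t' * s a := by
      rw [cs.wordProd_append, cs.wordProd_singleton, hπτ']
    rw [rightInvSeq_cons, hπτa]
    have hconcat : τ' ++ [a] = τ'.concat a := (List.concat_eq_append (as := τ') (a := a)).symm
    rw [hconcat, cs.rightInvSeq_concat, List.concat_eq_append, cnt_cons, cnt_append]
    have hhead : ((t' * s a)⁻¹ * s a * (t' * s a) = s a * t' * s a) ↔ (t' = s a) := by
      constructor
      · intro h
        have e0 : (t' * s a)⁻¹ * s a * (t' * s a) = (s a * t' * s a) * (t' * s a) := by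
          rw [mul_inv_rev, cs.inv_simple, ht'inv]
        rw [e0] at h
        have h2 : t' * s a = 1 := by
          have h3 := congrArg (fun g => (s a * t' * s a)⁻¹ * g) h
          simpa [mul_assoc] using h3
        have h4 : t' = (s a)⁻¹ := eq_inv_of_mul_eq_one_left h2
        rwa [cs.inv_simple] at h4
      · intro h
        rw [h, cs.simple_mul_simple_self]
        simp
    have hlast : (s a = s a * t' * s a) ↔ (t' = s a) := by
      rw [eq_comm, simple_conj_iff]
      constructor
      · intro h
        rwa [cs.simple_mul_simple_self, one_mul] at h
      · intro h
        rw [h, cs.simple_mul_simple_self, one_mul]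
    have hmap : cnt (s a * t' * s a) ((cs.rightInvSeq τ').map (MulAut.conj (s a))) =
        cnt t' (cs.rightInvSeq τ') := by
      apply cnt_map_cond
      intro r
      rw [MulAut.conj_apply, conj_eq_iff]
      have hcv : (s a)⁻¹ * (s a * t' * s a) * s a = t' := by
        rw [cs.inv_simple]
        calc s a * (s a * t' * s a) * s a = (s a * s a) * t' * (s a * s a) := by group
        _ = t' := by rw [cs.simple_mul_simple_self, one_mul, mul_one]
      rw [hcv]
    rw [hmap, cnt_cons, cnt_nil, if_congr hhead rfl rfl, if_congr hlast rfl rfl, ih c]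
    have h5 := zmod2_add_self (if t' = s a then (1 : ZMod 2) else 0)
    linear_combination h5

end AltString

namespace AltString

variable {B W : Type*} [Group W] {M : CoxeterMatrix B} (cs : CoxeterSystem M W)

local prefix:100 "s" => cs.simple
local prefix:100 "π" => cs.wordProd
local prefix:100 "ℓ" => cs.length

lemma cnt_ris_append (t : W) (α β : List B) :
    cnt t (cs.rightInvSeq (α ++ β)) =
      cnt (π β * t * (π β)⁻¹) (cs.rightInvSeq α) + cnt t (cs.rightInvSeq β) := by
  induction α with
  | nil => simp
  | cons a α' ih =>
    rw [List.cons_append, rightInvSeq_cons, rightInvSeq_cons, cnt_cons, cnt_cons, ih]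
    have hiff : ((π (α' ++ β))⁻¹ * s a * π (α' ++ β) = t) ↔
        ((π α')⁻¹ * s a * π α' = π β * t * (π β)⁻¹) := by
      rw [cs.wordProd_append]
      constructor
      · intro h; rw [← h]; group
      · intro h
        have h2 : t = (π β)⁻¹ * ((π α')⁻¹ * s a * π α') * π β := by rw [h]; group
        rw [h2]; group
    rw [if_congr hiff rfl rfl]
    ring

lemma one_ne_zero_zmod2 : (1 : ZMod 2) ≠ 0 := by decide

lemma cnt_ris_eq_one_of_isRightInversion {w t : W} (hwt : cs.IsRightInversion w t) :
    ∀ ω : List B, π ω = w → cnt t (cs.rightInvSeq ω) = 1 := by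
  obtain ⟨ht, hlen⟩ := hwt
  have htt : t * t = 1 := ht.mul_self
  have htinv : t⁻¹ = t := ht.inv
  obtain ⟨w', c, htc⟩ := ht
  obtain ⟨γ, hγ⟩ := cs.wordProd_surjective w'
  have hπτ : π (γ ++ c :: γ.reverse) = t := by
    rw [wordProd_palindrome cs γ c, hγ, ← htc]
  obtain ⟨ω₁, hω₁len, hω₁prod⟩ := cs.exists_reduced_word (w * t)
  have hred : cs.IsReduced ω₁ := by
    unfold CoxeterSystem.IsReduced
    exact hω₁len
  have hw : π (ω₁ ++ (γ ++ c :: γ.reverse)) = w := by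
    rw [cs.wordProd_append, ← hω₁prod, hπτ, mul_assoc, htt, mul_one]
  intro ω hω
  rw [cnt_ris_word_invariant cs (ω := ω) (ω' := ω₁ ++ (γ ++ c :: γ.reverse))
    (by rw [hω, hw]) t, cnt_ris_append]
  have hconj : π (γ ++ c :: γ.reverse) * t * (π (γ ++ c :: γ.reverse))⁻¹ = t := by
    rw [hπτ]
    rw [htinv]
    calc t * t * t = (t * t) * t := by group
    _ = t := by rw [htt, one_mul]
  rw [hconj]
  have hzero : cnt t (cs.rightInvSeq ω₁) = 0 := by
    rcases zmod2_cases (cnt t (cs.rightInvSeq ω₁)) with h0 | h1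
    · exact h0
    · exfalso
      have hmem : t ∈ cs.rightInvSeq ω₁ :=
        mem_of_cnt_ne_zero (by rw [h1]; exact one_ne_zero_zmod2)
      have hinv := cs.isRightInversion_of_mem_rightInvSeq hred hmem
      rw [← hω₁prod] at hinv
      obtain ⟨-, hlt⟩ := hinv
      rw [mul_assoc, htt, mul_one] at hlt
      omega
  rw [hzero, zero_add]
  have h1 : cnt (π γ * s c * (π γ)⁻¹) (cs.rightInvSeq (γ ++ c :: γ.reverse)) = 1 :=
    cnt_ris_palindrome cs γ c
  rw [hγ, ← htc] at h1
  exact h1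

/-- Strong exchange, right-handed version. -/
lemma exists_eraseIdx_of_isRightInversion {w t : W} (hwt : cs.IsRightInversion w t)
    (ω : List B) (hω : π ω = w) :
    ∃ j, j < ω.length ∧ w * t = π (ω.eraseIdx j) := by
  have h1 := cnt_ris_eq_one_of_isRightInversion cs hwt ω hω
  have hmem : t ∈ cs.rightInvSeq ω :=
    mem_of_cnt_ne_zero (by rw [h1]; exact one_ne_zero_zmod2)
  obtain ⟨j, hj, hget⟩ := List.mem_iff_getElem.mp hmem
  rw [cs.length_rightInvSeq] at hj
  refine ⟨j, hj, ?_⟩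
  have hgetD : (cs.rightInvSeq ω).getD j 1 = t := by
    rw [List.getD_eq_getElem _ _ (by rwa [cs.length_rightInvSeq])]
    exact hget
  rw [← hω, ← hgetD]
  exact cs.wordProd_mul_getD_rightInvSeq ω j

/-- Strong exchange, left-handed version. -/
lemma exists_eraseIdx_of_isLeftInversion {w t : W} (hwt : cs.IsLeftInversion w t)
    (ω : List B) (hω : π ω = w) :
    ∃ j, j < ω.length ∧ t * w = π (ω.eraseIdx j) := by
  have hr : cs.IsRightInversion w⁻¹ t := cs.isRightInversion_inv_iff.mpr hwt
  have h1 := cnt_ris_eq_one_of_isRightInversion cs hr ω.reverse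
    (by rw [cs.wordProd_reverse, hω])
  have hmem : t ∈ cs.rightInvSeq ω.reverse :=
    mem_of_cnt_ne_zero (by rw [h1]; exact one_ne_zero_zmod2)
  rw [cs.rightInvSeq_reverse, List.mem_reverse] at hmem
  obtain ⟨j, hj, hget⟩ := List.mem_iff_getElem.mp hmem
  rw [cs.length_leftInvSeq] at hj
  refine ⟨j, hj, ?_⟩
  have hgetD : (cs.leftInvSeq ω).getD j 1 = t := by
    rw [List.getD_eq_getElem _ _ (by rwa [cs.length_leftInvSeq])]
    exact hget
  rw [← hω, ← hgetD]
  exact cs.getD_leftInvSeq_mul_wordProd ω j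

end AltString

namespace AltString

open Complex

/-- `exp (2πi j / m) ≠ 1` for `0 < j < m`. -/
lemma exp_frac_ne_one {j m : ℕ} (hj : 0 < j) (hjm : j < m) :
    Complex.exp (2 * Real.pi * Complex.I * j / m) ≠ 1 := by
  intro h
  rw [Complex.exp_eq_one_iff] at h
  obtain ⟨n, hn⟩ := h
  have hm0 : (m : ℂ) ≠ 0 := by
    simp only [ne_eq, Nat.cast_eq_zero]
    omega
  have hpne : (2 * (Real.pi : ℂ) * Complex.I) ≠ 0 := by
    simp [Real.pi_ne_zero, Complex.I_ne_zero]
  have h1 : 2 * (Real.pi : ℂ) * Complex.I * j = n * (2 * Real.pi * Complex.I) * m := by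
    field_simp at hn
    linear_combination (2 * Real.pi * Complex.I) * hn
  have h2 : (j : ℂ) = n * m := by
    apply mul_left_cancel₀ hpne
    linear_combination h1
  have h3 : (j : ℤ) = n * m := by exact_mod_cast h2
  have h4 : (m : ℤ) ∣ (j : ℤ) := ⟨n, by linarith [h3]⟩
  have h5 : (m : ℤ) ≤ (j : ℤ) := Int.le_of_dvd (by exact_mod_cast hj) h4
  omega

/-- Chebyshev-like sequence. -/
noncomputable def Sc (ξ : ℂ) (n : ℕ) : ℂ := (ξ ^ n - (ξ⁻¹) ^ n) / (ξ - ξ⁻¹)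

lemma Sc_zero (ξ : ℂ) : Sc ξ 0 = 0 := by simp [Sc]

lemma Sc_one {ξ : ℂ} (hD : ξ - ξ⁻¹ ≠ 0) : Sc ξ 1 = 1 := by
  rw [Sc, pow_one, pow_one, div_self hD]

lemma Sc_rec {ξ : ℂ} (hξ : ξ ≠ 0) (hD : ξ - ξ⁻¹ ≠ 0) (n : ℕ) :
    Sc ξ (n + 2) = (ξ + ξ⁻¹) * Sc ξ (n + 1) - Sc ξ n := by
  rw [Sc, Sc, Sc, div_eq_iff hD, sub_mul, mul_assoc, div_mul_cancel₀ _ hD,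
    div_mul_cancel₀ _ hD]
  linear_combination (-(ξ ^ n - (ξ⁻¹) ^ n)) * (mul_inv_cancel₀ hξ)

lemma rec_closed {ξ : ℂ} (hξ : ξ ≠ 0) (hD : ξ - ξ⁻¹ ≠ 0) (h : ℕ → ℂ)
    (hrec : ∀ n, h (n + 2) = (ξ + ξ⁻¹) * h (n + 1) - h n) :
    ∀ n, h (n + 1) = Sc ξ (n + 1) * h 1 - Sc ξ n * h 0 := by
  have key : ∀ n, (h (n + 1) = Sc ξ (n + 1) * h 1 - Sc ξ n * h 0) ∧
      (h (n + 2) = Sc ξ (n + 2) * h 1 - Sc ξ (n + 1) * h 0) := by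
    intro n
    induction n with
    | zero =>
      constructor
      · rw [Sc_one hD, Sc_zero]; ring
      · rw [hrec 0, Sc_rec hξ hD 0, Sc_one hD, Sc_zero]; ring
    | succ n ih =>
      refine ⟨ih.2, ?_⟩
      have e2 : n + 1 + 1 = n + 2 := rfl
      have e3 : n + 1 + 2 = n + 3 := rfl
      rw [hrec (n + 1), ih.1, ih.2, e2, e3]
      have r1 := Sc_rec hξ hD n
      have r2 := Sc_rec hξ hD (n + 1)
      rw [e3, e2] at r2
      rw [r2, r1]
      ring
  exact fun n => (key n).1

end AltString

namespace AltString

open Complex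

noncomputable def kC (n : ℕ) : ℂ :=
  -(Complex.exp (Real.pi * Complex.I / n) + (Complex.exp (Real.pi * Complex.I / n))⁻¹) / 2

lemma exp_nat_mul' (z : ℂ) (n : ℕ) : Complex.exp z ^ n = Complex.exp (n * z) :=
  (Complex.exp_nat_mul z n).symm

lemma zeta_pow (n j : ℕ) :
    (Complex.exp (Real.pi * Complex.I / n)) ^ (2 * j) =
      Complex.exp (2 * Real.pi * Complex.I * j / n) := by
  rw [exp_nat_mul']
  congr 1
  push_cast
  ring

lemma kC_one : kC 1 = 1 := by
  unfold kC
  rw [Nat.cast_one, div_one, Complex.exp_pi_mul_I]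
  norm_num

lemma zeta_sq_ne_one {n : ℕ} (hn : 2 ≤ n) :
    (Complex.exp (Real.pi * Complex.I / n)) ^ 2 ≠ 1 := by
  rw [zeta_pow n 1]
  exact exp_frac_ne_one (by norm_num) (by omega)

lemma zeta_four_ne_one {n : ℕ} (hn : 3 ≤ n) :
    (Complex.exp (Real.pi * Complex.I / n)) ^ 4 ≠ 1 := by
  rw [show (4:ℕ) = 2 * 2 from rfl, zeta_pow n 2]
  exact exp_frac_ne_one (by norm_num) (by omega)

lemma one_sub_kC_sq_ne_zero {n : ℕ} (hn : 2 ≤ n) : 1 - (kC n) ^ 2 ≠ 0 := by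
  set ζ := Complex.exp (Real.pi * Complex.I / n) with hζ
  have hζ0 : ζ ≠ 0 := Complex.exp_ne_zero _
  have hinv : ζ * ζ⁻¹ = 1 := mul_inv_cancel₀ hζ0
  have hsub : ζ - ζ⁻¹ ≠ 0 := by
    intro h
    have h1 : ζ = ζ⁻¹ := sub_eq_zero.mp h
    apply zeta_sq_ne_one hn
    rw [← hζ, sq]
    nth_rewrite 2 [h1]
    exact hinv
  have heq : 1 - (kC n) ^ 2 = -((ζ - ζ⁻¹) ^ 2) / 4 := by
    unfold kC
    rw [← hζ]
    linear_combination (-1 : ℂ) * hinv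
  rw [heq]
  apply div_ne_zero
  · exact neg_ne_zero.mpr (pow_ne_zero 2 hsub)
  · norm_num

end AltString

namespace AltString

open Complex

variable {B : Type*} (M : CoxeterMatrix B)

noncomputable def BF (a : B) : (B →₀ ℂ) →ₗ[ℂ] ℂ :=
  Finsupp.linearCombination ℂ (fun b => kC (M.M a b))

lemma BF_single (a b : B) : BF M a (Finsupp.single b 1) = kC (M.M a b) := by
  unfold BF
  rw [Finsupp.linearCombination_single, one_smul]

lemma BF_single_self (a : B) : BF M a (Finsupp.single a 1) = 1 := by
  rw [BF_single, M.diagonal, kC_one]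

noncomputable def sig (a : B) : (B →₀ ℂ) → (B →₀ ℂ) :=
  fun v => v - (2 * BF M a v) • Finsupp.single a 1

lemma sig_invol (a : B) : Function.Involutive (sig M a) := by
  intro v
  unfold sig
  simp only [map_sub, map_smul, smul_eq_mul, BF_single_self, mul_one]
  module

noncomputable def sigP (a : B) : Equiv.Perm (B →₀ ℂ) := (sig_invol M a).toPerm

lemma sigP_apply (a : B) (v : B →₀ ℂ) : sigP M a v = sig M a v := rfl

section MainPair

variable {a b : B} (hab : a ≠ b)

lemma step_lemma (hab : a ≠ b) (u : B →₀ ℂ) (hua : BF M a u = 0) (hub : BF M b u = 0)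
    (x y : ℂ) :
    (sigP M a * sigP M b) (u + x • Finsupp.single a 1 + y • Finsupp.single b 1) =
      u + ((4 * (kC (M.M a b)) ^ 2 - 1) * x + 2 * (kC (M.M a b)) * y) • Finsupp.single a 1
        + (-(2 * (kC (M.M a b)) * x) - y) • Finsupp.single b 1 := by
  set c := kC (M.M a b) with hc
  have hba : kC (M.M b a) = c := by rw [hc, M.symmetric]
  rw [Equiv.Perm.mul_apply, sigP_apply, sigP_apply]
  unfold sig
  simp only [map_add, map_sub, map_smul, smul_eq_mul, hua, hub, BF_single_self,
    BF_single, hba, mul_one]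
  module

/-- The coefficient recursion map. -/
noncomputable def FC (c : ℂ) (p : ℂ × ℂ) : ℂ × ℂ :=
  ((4 * c ^ 2 - 1) * p.1 + 2 * c * p.2, -(2 * c * p.1) - p.2)

lemma iterate_lemma (hab : a ≠ b) (u : B →₀ ℂ) (hua : BF M a u = 0) (hub : BF M b u = 0)
    (x y : ℂ) (n : ℕ) :
    ((sigP M a * sigP M b) ^ n) (u + x • Finsupp.single a 1 + y • Finsupp.single b 1) =
      u + ((FC (kC (M.M a b)))^[n] (x, y)).1 • Finsupp.single a 1
        + ((FC (kC (M.M a b)))^[n] (x, y)).2 • Finsupp.single b 1 := by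
  induction n with
  | zero => simp
  | succ n ih =>
    rw [pow_succ', Equiv.Perm.mul_apply, ih, Function.iterate_succ_apply']
    exact step_lemma M hab u hua hub _ _

lemma FC_rec_fst (c : ℂ) (p : ℂ × ℂ) (k : ℕ) :
    ((FC c)^[k + 2] p).1 = (4 * c ^ 2 - 2) * ((FC c)^[k + 1] p).1 - ((FC c)^[k] p).1 := by
  rw [Function.iterate_succ_apply', Function.iterate_succ_apply' (FC c) k]
  unfold FC
  ring

lemma FC_rec_snd (c : ℂ) (p : ℂ × ℂ) (k : ℕ) :
    ((FC c)^[k + 2] p).2 = (4 * c ^ 2 - 2) * ((FC c)^[k + 1] p).2 - ((FC c)^[k] p).2 := by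
  rw [Function.iterate_succ_apply', Function.iterate_succ_apply' (FC c) k]
  unfold FC
  ring

end MainPair

end AltString

namespace AltString

open Complex

section XiFacts

variable {n : ℕ}

lemma xi_ne_zero (n : ℕ) : (Complex.exp (Real.pi * Complex.I / n)) ^ 2 ≠ 0 :=
  pow_ne_zero 2 (Complex.exp_ne_zero _)

lemma xi_D_ne_zero (hn3 : 3 ≤ n) :
    (Complex.exp (Real.pi * Complex.I / n)) ^ 2 -
      ((Complex.exp (Real.pi * Complex.I / n)) ^ 2)⁻¹ ≠ 0 := by
  set ξ := (Complex.exp (Real.pi * Complex.I / n)) ^ 2 with hξ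
  intro h
  have h1 : ξ = ξ⁻¹ := sub_eq_zero.mp h
  have h2 : ξ * ξ = 1 := by
    nth_rewrite 2 [h1]
    exact mul_inv_cancel₀ (xi_ne_zero n)
  apply zeta_four_ne_one hn3
  calc (Complex.exp (Real.pi * Complex.I / n)) ^ 4 = ξ * ξ := by rw [hξ]; ring
  _ = 1 := h2

lemma xi_T (n : ℕ) : 4 * (kC n) ^ 2 - 2 =
    (Complex.exp (Real.pi * Complex.I / n)) ^ 2 +
      ((Complex.exp (Real.pi * Complex.I / n)) ^ 2)⁻¹ := by
  set ζ := Complex.exp (Real.pi * Complex.I / n) with hζ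
  have hinv : ζ * ζ⁻¹ = 1 := mul_inv_cancel₀ (Complex.exp_ne_zero _)
  have hip : (ζ ^ 2)⁻¹ = (ζ⁻¹) ^ 2 := (inv_pow ζ 2).symm
  rw [hip]
  unfold kC
  rw [← hζ]
  linear_combination (2 : ℂ) * hinv

lemma xi_pow_n (hn : n ≠ 0) : ((Complex.exp (Real.pi * Complex.I / n)) ^ 2) ^ n = 1 := by
  rw [← pow_mul, zeta_pow n n]
  have hn' : (n : ℂ) ≠ 0 := Nat.cast_ne_zero.mpr hn
  have harg : 2 * (Real.pi : ℂ) * Complex.I * n / n = 2 * Real.pi * Complex.I := by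
    rw [mul_div_assoc, div_self hn', mul_one]
  rw [harg, Complex.exp_two_pi_mul_I]

lemma Sc_xi_n (hn : n ≠ 0) : Sc ((Complex.exp (Real.pi * Complex.I / n)) ^ 2) n = 0 := by
  unfold Sc
  rw [inv_pow, xi_pow_n hn, inv_one, sub_self, zero_div]

lemma Sc_xi_nsub1 (hn3 : 3 ≤ n) :
    Sc ((Complex.exp (Real.pi * Complex.I / n)) ^ 2) (n - 1) = -1 := by
  set ξ := (Complex.exp (Real.pi * Complex.I / n)) ^ 2 with hξ
  have hξ0 : ξ ≠ 0 := xi_ne_zero n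
  have hD := xi_D_ne_zero hn3
  rw [← hξ] at hD
  have hsucc : (n - 1) + 1 = n := by omega
  have hp : ξ ^ (n - 1) * ξ = 1 := by
    rw [← pow_succ, hsucc]
    exact xi_pow_n (by omega)
  have hp1 : ξ ^ (n - 1) = ξ⁻¹ := eq_inv_of_mul_eq_one_left hp
  unfold Sc
  rw [inv_pow, hp1, inv_inv, div_eq_iff hD]
  ring

end XiFacts

lemma kC_two : kC 2 = 0 := by
  set ζ := Complex.exp (Real.pi * Complex.I / (2:ℕ)) with hζ
  have hζ2 : ζ ^ 2 = -1 := by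
    rw [hζ, zeta_pow 2 1]
    rw [show 2 * (Real.pi:ℂ) * Complex.I * (1:ℕ) / (2:ℕ) = Real.pi * Complex.I by push_cast; ring]
    exact Complex.exp_pi_mul_I
  have hζinv : ζ⁻¹ = -ζ := by
    apply inv_eq_of_mul_eq_one_right
    rw [show ζ * -ζ = -(ζ^2) by ring, hζ2]
    norm_num
  unfold kC
  rw [← hζ, hζinv]
  ring

lemma FC_iter_coords {n : ℕ} (hn3 : 3 ≤ n) (p : ℂ × ℂ) :
    ∀ j : ℕ,
      (((FC (kC n))^[j + 1] p).1 =
        Sc ((Complex.exp (Real.pi * Complex.I / n)) ^ 2) (j + 1) * ((FC (kC n)) p).1 -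
          Sc ((Complex.exp (Real.pi * Complex.I / n)) ^ 2) j * p.1) ∧
      (((FC (kC n))^[j + 1] p).2 =
        Sc ((Complex.exp (Real.pi * Complex.I / n)) ^ 2) (j + 1) * ((FC (kC n)) p).2 -
          Sc ((Complex.exp (Real.pi * Complex.I / n)) ^ 2) j * p.2) := by
  set ξ := (Complex.exp (Real.pi * Complex.I / n)) ^ 2 with hξ
  have hξ0 : ξ ≠ 0 := xi_ne_zero n
  have hD := xi_D_ne_zero hn3
  rw [← hξ] at hD
  have hT := xi_T n
  rw [← hξ] at hT
  intro j
  constructor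
  · have := rec_closed hξ0 hD (fun k => ((FC (kC n))^[k] p).1)
      (fun k => by
        show ((FC (kC n))^[k + 2] p).1 =
          (ξ + ξ⁻¹) * ((FC (kC n))^[k + 1] p).1 - ((FC (kC n))^[k] p).1
        rw [FC_rec_fst, hT]) j
    simpa using this
  · have := rec_closed hξ0 hD (fun k => ((FC (kC n))^[k] p).2)
      (fun k => by
        show ((FC (kC n))^[k + 2] p).2 =
          (ξ + ξ⁻¹) * ((FC (kC n))^[k + 1] p).2 - ((FC (kC n))^[k] p).2
        rw [FC_rec_snd, hT]) j
    simpa using this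

lemma FC_iter_n {n : ℕ} (hn3 : 3 ≤ n) (p : ℂ × ℂ) : (FC (kC n))^[n] p = p := by
  have hsucc : (n - 1) + 1 = n := by omega
  have h := FC_iter_coords hn3 p (n - 1)
  rw [hsucc, Sc_xi_n (by omega : n ≠ 0), Sc_xi_nsub1 hn3] at h
  obtain ⟨h1, h2⟩ := h
  have e1 : ((FC (kC n))^[n] p).1 = p.1 := by rw [h1]; ring
  have e2 : ((FC (kC n))^[n] p).2 = p.2 := by rw [h2]; ring
  exact Prod.ext e1 e2

lemma FC_iter_two (p : ℂ × ℂ) : (FC (kC 2))^[2] p = p := by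
  rw [show (2:ℕ) = 1 + 1 from rfl, Function.iterate_succ_apply', Function.iterate_one, kC_two]
  unfold FC
  apply Prod.ext <;> (simp only; ring)

end AltString

namespace AltString

open Complex

variable {B : Type*} {M : CoxeterMatrix B}

lemma sig_decomp (M : CoxeterMatrix B) {a b : B} (hab : a ≠ b) (hn2 : 2 ≤ M.M a b) (v : B →₀ ℂ) :
    ∃ (u : B →₀ ℂ) (x y : ℂ), BF M a u = 0 ∧ BF M b u = 0 ∧
      v = u + x • Finsupp.single a 1 + y • Finsupp.single b 1 := by
  set c := kC (M.M a b) with hc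
  have hba : kC (M.M b a) = c := by rw [hc, M.symmetric]
  have h1c : 1 - c ^ 2 ≠ 0 := one_sub_kC_sq_ne_zero hn2
  refine ⟨v - ((BF M a v - c * BF M b v) / (1 - c ^ 2)) • Finsupp.single a 1
      - ((BF M b v - c * BF M a v) / (1 - c ^ 2)) • Finsupp.single b 1,
    (BF M a v - c * BF M b v) / (1 - c ^ 2), (BF M b v - c * BF M a v) / (1 - c ^ 2),
    ?_, ?_, ?_⟩
  · simp only [map_sub, map_smul, smul_eq_mul, BF_single_self, BF_single, hba, mul_one]
    field_simp
    ring
  · simp only [map_sub, map_smul, smul_eq_mul, BF_single_self, BF_single, hba, mul_one]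
    field_simp
    ring
  · module

lemma sig_liftable (M : CoxeterMatrix B) : M.IsLiftable (sigP M) := by
  intro a b
  rcases eq_or_ne a b with rfl | hab
  · rw [M.diagonal, pow_one]
    apply Equiv.ext
    intro v
    rw [Equiv.Perm.mul_apply, Equiv.Perm.one_apply, sigP_apply, sigP_apply]
    exact sig_invol M a v
  rcases Nat.eq_zero_or_pos (M.M a b) with h0 | hpos
  · rw [h0, pow_zero]
  have hn2 : 2 ≤ M.M a b := by
    have := M.off_diagonal a b hab
    omega
  apply Equiv.ext
  intro v
  obtain ⟨u, x, y, hua, hub, hv⟩ := sig_decomp M hab hn2 v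
  rw [Equiv.Perm.one_apply, hv, iterate_lemma M hab u hua hub x y (M.M a b)]
  rcases eq_or_lt_of_le hn2 with h2 | h3
  · rw [← h2, FC_iter_two]
  · rw [FC_iter_n h3]

/-- The key faithfulness result: `(s a * s b) ^ p ≠ 1` for `0 < p < M a b`. -/
lemma simple_mul_pow_ne_one {W : Type*} [Group W] (cs : CoxeterSystem M W)
    {a b : B} (hn2 : 2 ≤ M.M a b) {p : ℕ} (hp : 0 < p) (hpm : p < M.M a b) :
    (cs.simple a * cs.simple b) ^ p ≠ 1 := by
  have hab : a ≠ b := by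
    intro h
    rw [h, M.diagonal] at hn2
    omega
  set n := M.M a b with hn
  intro h
  set ψ := cs.lift ⟨sigP M, sig_liftable M⟩ with hψ
  have hψ1 : ψ (cs.simple a) = sigP M a := cs.lift_apply_simple (sig_liftable M) a
  have hψ2 : ψ (cs.simple b) = sigP M b := cs.lift_apply_simple (sig_liftable M) b
  have h2 : (sigP M a * sigP M b) ^ p = 1 := by
    rw [← hψ1, ← hψ2, ← map_mul, ← map_pow, h, map_one]
  have h3 := congrArg (fun f => f ((0 : B →₀ ℂ) + (1:ℂ) • Finsupp.single a 1
      + (0:ℂ) • Finsupp.single b 1)) h2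
  rw [iterate_lemma M hab 0 (map_zero _) (map_zero _) 1 0 p, Equiv.Perm.one_apply] at h3
  -- extract coordinates
  set g := (FC (kC n))^[p] ((1:ℂ), (0:ℂ)) with hg
  have hco : ∀ (x1 y1 x2 y2 : ℂ),
      (0 : B →₀ ℂ) + x1 • Finsupp.single a 1 + y1 • Finsupp.single b 1 =
      (0 : B →₀ ℂ) + x2 • Finsupp.single a 1 + y2 • Finsupp.single b 1 → x1 = x2 ∧ y1 = y2 := by
    intro x1 y1 x2 y2 hh
    constructor
    · have := congrArg (fun f : B →₀ ℂ => f a) hh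
      simpa [Finsupp.single_apply, hab, Ne.symm hab] using this
    · have := congrArg (fun f : B →₀ ℂ => f b) hh
      simpa [Finsupp.single_apply, hab, Ne.symm hab] using this
  obtain ⟨hx, hy⟩ := hco g.1 g.2 1 0 h3
  -- now case analysis
  rcases eq_or_lt_of_le hn2 with h2' | h3'
  · -- n = 2, so p = 1
    have hp1 : p = 1 := by omega
    rw [hp1] at hg
    rw [hg] at hx
    rw [Function.iterate_one] at hx
    rw [← h2', kC_two] at hx
    unfold FC at hx
    simp only at hx
    norm_num at hx
  · -- n ≥ 3
    set ξ := (Complex.exp (Real.pi * Complex.I / n)) ^ 2 with hξ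
    have hξ0 : ξ ≠ 0 := xi_ne_zero n
    have hD := xi_D_ne_zero h3'
    rw [← hξ] at hD
    have hcne : kC n ≠ 0 := by
      intro hc0
      apply zeta_four_ne_one h3'
      set ζ := Complex.exp (Real.pi * Complex.I / n) with hζ
      have hinv : ζ * ζ⁻¹ = 1 := mul_inv_cancel₀ (Complex.exp_ne_zero _)
      have hzz : ζ + ζ⁻¹ = 0 := by
        unfold kC at hc0
        rw [← hζ] at hc0
        rcases div_eq_zero_iff.mp hc0 with h4 | h4
        · exact neg_eq_zero.mp h4
        · norm_num at h4
      have hζ2 : ζ ^ 2 = -1 := by linear_combination ζ * hzz - hinv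
      calc ζ ^ 4 = (ζ ^ 2) ^ 2 := by ring
      _ = 1 := by rw [hζ2]; norm_num
    have hsp : (p - 1) + 1 = p := by omega
    have hc2 := (FC_iter_coords h3' ((1:ℂ), (0:ℂ)) (p - 1)).2
    rw [hsp] at hc2
    have hF1 : (FC (kC n) ((1:ℂ), (0:ℂ))).2 = -(2 * kC n) := by
      unfold FC; norm_num
    rw [hF1] at hc2
    rw [← hξ] at hc2
    have h5 : Sc ξ p * -(2 * kC n) - Sc ξ (p - 1) * ((1:ℂ), (0:ℂ)).2 = 0 := by
      rw [← hc2]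
      rw [← hg] at *
      exact hy
    have hScp : Sc ξ p = 0 := by
      simp only [Prod.snd] at h5
      have h6 : Sc ξ p * (2 * kC n) = 0 := by linear_combination -h5
      rcases mul_eq_zero.mp h6 with h7 | h7
      · exact h7
      · exact absurd h7 (by simp [hcne])
    have hnum : ξ ^ p * ξ ^ p = 1 := by
      unfold Sc at hScp
      rcases div_eq_zero_iff.mp hScp with h8 | h8
      · have h9 : ξ ^ p = (ξ⁻¹) ^ p := sub_eq_zero.mp h8
        rw [inv_pow] at h9
        nth_rewrite 2 [h9]
        exact mul_inv_cancel₀ (pow_ne_zero p hξ0)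
      · exact absurd h8 hD
    have hx2p : ξ ^ (2 * p) = 1 := by
      rw [two_mul, pow_add, hnum]
    rcases lt_trichotomy (2 * p) n with hlt | heq | hgt
    · rw [hξ, ← pow_mul, zeta_pow n (2 * p)] at hx2p
      exact absurd hx2p (exp_frac_ne_one (by omega) hlt)
    · -- 2p = n
      have hp0 : (p : ℂ) ≠ 0 := Nat.cast_ne_zero.mpr (by omega)
      have hξp : ξ ^ p = -1 := by
        rw [hξ, ← pow_mul, zeta_pow n p, ← heq]
        rw [show 2 * (Real.pi:ℂ) * Complex.I * p / ((2 * p : ℕ) : ℂ) =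
            Real.pi * Complex.I by push_cast; field_simp]
        exact Complex.exp_pi_mul_I
      have hSc1 : Sc ξ (p - 1) = 1 := by
        have hpow : ξ ^ (p - 1) * ξ = ξ ^ p := by rw [← pow_succ, hsp]
        have h6 : ξ ^ (p - 1) = -ξ⁻¹ := by
          have h7 := congrArg (· * ξ⁻¹) hpow
          simp only [mul_assoc, mul_inv_cancel₀ hξ0, mul_one] at h7
          rw [h7, hξp]
          ring
        unfold Sc
        rw [inv_pow, h6, inv_neg, inv_inv, div_eq_iff hD]
        ring
      have hc1 := (FC_iter_coords h3' ((1:ℂ), (0:ℂ)) (p - 1)).1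
      rw [hsp, ← hξ, hScp, hSc1] at hc1
      rw [← hg] at hc1
      rw [hx] at hc1
      norm_num at hc1
    · -- 2p > n
      have h8 : ξ ^ n = 1 := by rw [hξ]; exact xi_pow_n (by omega)
      have h9 : ξ ^ (2 * p - n) = 1 := by
        have h10 : ξ ^ (2 * p) = ξ ^ (2 * p - n) * ξ ^ n := by
          rw [← pow_add]
          congr 1
          omega
        rw [h8, mul_one] at h10
        rw [← h10, hx2p]
      rw [hξ, ← pow_mul, zeta_pow n (2 * p - n)] at h9
      exact absurd h9 (exp_frac_ne_one (by omega) (by omega))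

end AltString

namespace AltString

lemma mul_pow_swap {G : Type*} [Monoid G] (x y : G) : ∀ j : ℕ, (x * y) ^ (j + 1) = x * (y * x) ^ j * y
  | 0 => by simp
  | (j + 1) => by
    rw [pow_succ, mul_pow_swap x y j, pow_succ]
    simp [mul_assoc]

variable {B W : Type*} [Group W] {M : CoxeterMatrix B} (cs : CoxeterSystem M W)

local prefix:100 "s" => cs.simple
local prefix:100 "π" => cs.wordProd
local prefix:100 "ℓ" => cs.length

lemma cnt_ris_alt : ∀ (d : ℕ) (a b : B) (t : W),
    cnt t (cs.rightInvSeq (CoxeterSystem.alternatingWord a b d)) =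
      ∑ j ∈ Finset.range d, (if t = (s b * s a) ^ j * s b then (1 : ZMod 2) else 0) := by
  intro d
  induction d with
  | zero => intro a b t; simp [CoxeterSystem.alternatingWord]
  | succ d ih =>
    intro a b t
    rw [CoxeterSystem.alternatingWord_succ, cs.rightInvSeq_concat, List.concat_eq_append,
      cnt_append]
    have hmap : cnt t ((cs.rightInvSeq (CoxeterSystem.alternatingWord b a d)).map
        (MulAut.conj (s b))) = cnt (s b * t * s b) (cs.rightInvSeq (CoxeterSystem.alternatingWord b a d)) := by
      apply cnt_map_cond
      intro r
      rw [MulAut.conj_apply, cs.inv_simple]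
      exact simple_conj_iff cs b r t
    rw [hmap, ih b a (s b * t * s b)]
    have hterm : ∀ j : ℕ, ((s b * t * s b = (s a * s b) ^ j * s a) ↔
        (t = (s b * s a) ^ (j + 1) * s b)) := by
      intro j
      rw [simple_conj_iff cs b, mul_pow_swap]
      constructor
      · intro h; rw [h]; group
      · intro h; rw [h]; group
    have hsum : ∑ j ∈ Finset.range d,
        (if s b * t * s b = (s a * s b) ^ j * s a then (1 : ZMod 2) else 0) =
        ∑ j ∈ Finset.range d, (if t = (s b * s a) ^ (j + 1) * s b then (1 : ZMod 2) else 0) :=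
      Finset.sum_congr rfl (fun j _ => by rw [if_congr (hterm j) rfl rfl])
    rw [hsum, Finset.sum_range_succ']
    have h0 : ((s b * s a) ^ 0 * s b : W) = s b := by rw [pow_zero, one_mul]
    rw [h0]
    rw [cnt_cons, cnt_nil, add_zero]
    congr 1
    exact if_congr eq_comm rfl rfl

/-- Alternating words of length at most `M a b` are reduced. -/
lemma length_alt {a b : B} (hn2 : 2 ≤ M.M a b) {d : ℕ} (hd : d ≤ M.M a b) :
    ℓ (π (CoxeterSystem.alternatingWord a b d)) = d := by
  have hsym : M.M b a = M.M a b := M.symmetric b a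
  have hinj : ∀ j j', j < d → j' < d → (s b * s a) ^ j * s b = (s b * s a) ^ j' * s b → j = j' := by
    intro j j' hj hj' h
    by_contra hne
    rcases Nat.lt_or_ge j j' with hlt | hge
    · have h1 : (s b * s a) ^ (j' - j) = 1 := by
        have h2 : (s b * s a) ^ j * (s b * s a) ^ (j' - j) * s b = (s b * s a) ^ j * s b := by
          rw [← pow_add, show j + (j' - j) = j' by omega, h]
        have h3 := mul_right_cancel h2
        exact mul_left_cancel (a := (s b * s a) ^ j) (by rw [mul_one]; exact h3)
      exact simple_mul_pow_ne_one cs (a := b) (b := a) (by omega)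
        (by omega) (by omega) h1
    · have hlt' : j' < j := by omega
      have h1 : (s b * s a) ^ (j - j') = 1 := by
        have h2 : (s b * s a) ^ j' * (s b * s a) ^ (j - j') * s b = (s b * s a) ^ j' * s b := by
          rw [← pow_add, show j' + (j - j') = j by omega, h.symm]
        have h3 := mul_right_cancel h2
        exact mul_left_cancel (a := (s b * s a) ^ j') (by rw [mul_one]; exact h3)
      exact simple_mul_pow_ne_one cs (a := b) (b := a) (by omega)
        (by omega) (by omega) h1
  apply _root_.le_antisymm
  · calc ℓ (π (CoxeterSystem.alternatingWord a b d)) ≤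
        (CoxeterSystem.alternatingWord a b d).length := cs.length_wordProd_le _
    _ = d := CoxeterSystem.length_alternatingWord a b d
  · -- lower bound
    obtain ⟨ω₀, hω₀len, hω₀prod⟩ := cs.exists_reduced_word (π (CoxeterSystem.alternatingWord a b d))
    have hkey : ∀ j < d, ((s b * s a) ^ j * s b) ∈ cs.rightInvSeq ω₀ := by
      intro j hj
      apply mem_of_cnt_ne_zero
      have hcnt : cnt ((s b * s a) ^ j * s b) (cs.rightInvSeq ω₀) = 1 := by
        rw [cnt_ris_word_invariant cs (ω := ω₀) (ω' := CoxeterSystem.alternatingWord a b d)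
          hω₀prod.symm, cnt_ris_alt]
        have : ∀ j' ∈ Finset.range d,
            (if (s b * s a) ^ j * s b = (s b * s a) ^ j' * s b then (1 : ZMod 2) else 0) =
            (if j' = j then (1 : ZMod 2) else 0) := by
          intro j' hj'
          rw [Finset.mem_range] at hj'
          congr 1
          apply propext
          constructor
          · intro h; exact (hinj j j' hj hj' h).symm
          · intro h; rw [h]
        rw [Finset.sum_congr rfl this, Finset.sum_ite_eq' (Finset.range d) j (fun _ => (1:ZMod 2))]
        rw [if_pos (Finset.mem_range.mpr hj)]
      rw [hcnt]
      exact one_ne_zero_zmod2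
    have hsub : (Finset.range d).image (fun j => (s b * s a) ^ j * s b) ⊆
        (cs.rightInvSeq ω₀).toFinset := by
      intro t ht
      rw [Finset.mem_image] at ht
      obtain ⟨j, hj, rfl⟩ := ht
      rw [List.mem_toFinset]
      exact hkey j (Finset.mem_range.mp hj)
    have hcard : ((Finset.range d).image (fun j => (s b * s a) ^ j * s b)).card = d := by
      rw [Finset.card_image_of_injOn, Finset.card_range]
      intro j hj j' hj' h
      exact hinj j j' (Finset.mem_range.mp hj) (Finset.mem_range.mp hj') h
    calc d = ((Finset.range d).image (fun j => (s b * s a) ^ j * s b)).card := hcard.symm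
    _ ≤ (cs.rightInvSeq ω₀).toFinset.card := Finset.card_le_card hsub
    _ ≤ (cs.rightInvSeq ω₀).length := (cs.rightInvSeq ω₀).toFinset_card_le
    _ = ω₀.length := cs.length_rightInvSeq ω₀
    _ = ℓ (π (CoxeterSystem.alternatingWord a b d)) := by rw [hω₀prod]; exact hω₀len.symm

end AltString

namespace AltString

variable {B W : Type*} [Group W] {M : CoxeterMatrix B} (cs : CoxeterSystem M W)

local prefix:100 "s" => cs.simple
local prefix:100 "π" => cs.wordProd
local prefix:100 "ℓ" => cs.length

section Dihedral

variable (i i' : B) {m : ℕ}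

lemma z_zpow_m (hM : M.M i i' = m) : (s i * s i') ^ (m : ℤ) = 1 := by
  rw [zpow_natCast, ← hM]
  exact cs.simple_mul_simple_pow i i'

lemma z_period (hM : M.M i i' = m) (hm : 3 ≤ m) (e : ℤ) :
    (s i * s i') ^ e = (s i * s i') ^ (e % (m : ℤ)) := by
  set z := s i * s i' with hz
  calc z ^ e = z ^ ((m : ℤ) * (e / (m : ℤ)) + e % (m : ℤ)) := by rw [Int.mul_ediv_add_emod]
  _ = (z ^ (m : ℤ)) ^ (e / (m : ℤ)) * z ^ (e % (m : ℤ)) := by rw [zpow_add, zpow_mul]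
  _ = z ^ (e % (m : ℤ)) := by rw [hz, z_zpow_m cs i i' hM, one_zpow, one_mul]

lemma sconj_z (e : ℤ) : s i' * (s i * s i') ^ e = (s i * s i') ^ (-e) * s i' := by
  set z := s i * s i' with hz
  have h1 : s i' * z * (s i')⁻¹ = z⁻¹ := by
    rw [cs.inv_simple, hz, mul_inv_rev, cs.inv_simple, cs.inv_simple]
    calc s i' * (s i * s i') * s i' = s i' * s i * (s i' * s i') := by group
    _ = s i' * s i := by rw [cs.simple_mul_simple_self, mul_one]
  calc s i' * z ^ e = (s i' * z ^ e * (s i')⁻¹) * s i' := by group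
  _ = (s i' * z * (s i')⁻¹) ^ e * s i' := by rw [← conj_zpow]
  _ = (z⁻¹) ^ e * s i' := by rw [h1]
  _ = z ^ (-e) * s i' := by rw [inv_zpow, zpow_neg]

lemma si_eq : s i = (s i * s i') * s i' := by
  rw [cs.simple_mul_simple_cancel_right]

/-- Normal form predicate for elements of the dihedral subgroup. -/
def NF (x : W) : Prop :=
  ∃ e : ℤ, x = (s i * s i') ^ e ∨ x = (s i * s i') ^ e * s i'

lemma nf_one : NF cs i i' 1 := ⟨0, Or.inl (by rw [zpow_zero])⟩

lemma nf_smul (c : B) (hc : c = i ∨ c = i') (x : W) (h : NF cs i i' x) :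
    NF cs i i' (s c * x) := by
  obtain ⟨e, h | h⟩ := h
  · rcases hc with hc | hc
    · rw [hc]
      refine ⟨1 - e, Or.inr ?_⟩
      rw [h]
      calc s i * (s i * s i') ^ e
          = (s i * (s i' * s i')) * (s i * s i') ^ e := by
            rw [cs.simple_mul_simple_self, mul_one]
      _ = (s i * s i') * (s i' * (s i * s i') ^ e) := by group
      _ = (s i * s i') * ((s i * s i') ^ (-e) * s i') := by rw [sconj_z cs i i' e]
      _ = (s i * s i') ^ (1 - e) * s i' := by
            rw [← mul_assoc, ← zpow_one_add]
            ring_nf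
    · rw [hc]
      refine ⟨-e, Or.inr ?_⟩
      rw [h, sconj_z cs i i' e]
  · rcases hc with hc | hc
    · rw [hc]
      refine ⟨1 - e, Or.inl ?_⟩
      rw [h]
      calc s i * ((s i * s i') ^ e * s i')
          = (s i * (s i' * s i')) * (s i * s i') ^ e * s i' := by
            rw [cs.simple_mul_simple_self, mul_one]; group
      _ = (s i * s i') * (s i' * (s i * s i') ^ e) * s i' := by group
      _ = (s i * s i') * ((s i * s i') ^ (-e) * s i') * s i' := by rw [sconj_z cs i i' e]
      _ = (s i * s i') * (s i * s i') ^ (-e) * (s i' * s i') := by group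
      _ = (s i * s i') ^ (1 - e) := by
            rw [cs.simple_mul_simple_self, mul_one, ← zpow_one_add]
            ring_nf
    · rw [hc]
      refine ⟨-e, Or.inl ?_⟩
      rw [h]
      calc s i' * ((s i * s i') ^ e * s i')
          = (s i' * (s i * s i') ^ e) * s i' := by group
      _ = (s i * s i') ^ (-e) * s i' * s i' := by rw [sconj_z cs i i' e]
      _ = (s i * s i') ^ (-e) * (s i' * s i') := by group
      _ = (s i * s i') ^ (-e) := by rw [cs.simple_mul_simple_self, mul_one]

lemma word_nf : ∀ g : List B, (∀ c ∈ g, c = i ∨ c = i') → NF cs i i' (π g) := by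
  intro g
  induction g with
  | nil => intro _; rw [cs.wordProd_nil]; exact nf_one cs i i'
  | cons c g ih =>
    intro hall
    rw [cs.wordProd_cons]
    exact nf_smul cs i i' c (hall c (List.mem_cons_self (a := c) (l := g))) _
      (ih (fun c' hc' => hall c' (List.mem_cons_of_mem c hc')))

lemma prod_alt_ii'_even (f : ℕ) :
    π (CoxeterSystem.alternatingWord i i' (2 * f)) = (s i * s i') ^ (f : ℤ) := by
  rw [cs.prod_alternatingWord_eq_mul_pow, if_pos (even_two_mul f),
    Nat.mul_div_cancel_left f (by norm_num : 0 < 2), one_mul, zpow_natCast]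

lemma prod_alt_i'i_even (f : ℕ) :
    π (CoxeterSystem.alternatingWord i' i (2 * f)) = (s i * s i') ^ (-(f : ℤ)) := by
  rw [cs.prod_alternatingWord_eq_mul_pow, if_pos (even_two_mul f),
    Nat.mul_div_cancel_left f (by norm_num : 0 < 2), one_mul]
  rw [show s i' * s i = (s i * s i')⁻¹ by
    rw [mul_inv_rev, cs.inv_simple, cs.inv_simple]]
  rw [inv_pow, ← zpow_natCast, ← inv_zpow, inv_zpow']

lemma prod_alt_ii'_odd (f : ℕ) :
    π (CoxeterSystem.alternatingWord i i' (2 * f + 1)) =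
      (s i * s i') ^ (-(f : ℤ)) * s i' := by
  rw [cs.prod_alternatingWord_eq_mul_pow]
  rw [if_neg (by simp [Nat.even_add_one, parity_simps])]
  rw [show (2 * f + 1) / 2 = f by omega]
  rw [← zpow_natCast, sconj_z cs i i' f]

lemma prod_alt_i'i_odd (f : ℕ) :
    π (CoxeterSystem.alternatingWord i' i (2 * f + 1)) =
      (s i * s i') ^ (1 + (f : ℤ)) * s i' := by
  rw [cs.prod_alternatingWord_eq_mul_pow]
  rw [if_neg (by simp [Nat.even_add_one, parity_simps])]
  rw [show (2 * f + 1) / 2 = f by omega]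
  rw [show s i' * s i = (s i * s i')⁻¹ by rw [mul_inv_rev, cs.inv_simple, cs.inv_simple]]
  rw [inv_pow, ← zpow_natCast, ← inv_zpow, inv_zpow']
  have h2 := sconj_z cs i i' (-(f:ℤ))
  rw [neg_neg] at h2
  calc s i * (s i * s i') ^ (-(f:ℤ))
      = (s i * (s i' * s i')) * (s i * s i') ^ (-(f:ℤ)) := by
        rw [cs.simple_mul_simple_self, mul_one]
  _ = (s i * s i') * (s i' * (s i * s i') ^ (-(f:ℤ))) := by group
  _ = (s i * s i') * ((s i * s i') ^ (f:ℤ) * s i') := by rw [h2]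
  _ = (s i * s i') ^ (1 + (f:ℤ)) * s i' := by rw [← mul_assoc, ← zpow_one_add]

/-- The canonical form: any dihedral element is the product of an alternating word of
length at most `m`. -/
lemma nf_canonical (hM : M.M i i' = m) (hm : 3 ≤ m) (x : W) (h : NF cs i i' x) :
    ∃ d ≤ m, ∃ a b : B, ((a = i ∧ b = i') ∨ (a = i' ∧ b = i)) ∧
      x = π (CoxeterSystem.alternatingWord a b d) := by
  set z := s i * s i' with hz
  have hm0 : (0 : ℤ) < (m : ℤ) := by exact_mod_cast (by omega : 0 < m)
  obtain ⟨e, h | h⟩ := h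
  · -- x = z ^ e
    set r := e % (m : ℤ) with hr
    have hr0 : 0 ≤ r := Int.emod_nonneg e (by omega)
    have hrm : r < m := Int.emod_lt_of_pos e hm0
    have hper : x = z ^ r := by rw [h, hz, z_period cs i i' hM hm e]
    set rn := r.toNat with hrn
    have hrr : (rn : ℤ) = r := Int.toNat_of_nonneg hr0
    have hrnm : rn < m := by omega
    rcases le_or_gt (2 * rn) m with hle | hgt
    · exact ⟨2 * rn, hle, i, i', Or.inl ⟨rfl, rfl⟩, by
        rw [prod_alt_ii'_even cs i i', ← hz, hrr, ← hper]⟩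
    · refine ⟨2 * (m - rn), by omega, i', i, Or.inr ⟨rfl, rfl⟩, ?_⟩
      rw [prod_alt_i'i_even cs i i', ← hz]
      rw [hper]
      rw [show (-((m - rn : ℕ) : ℤ)) = r - m by push_cast; omega]
      rw [sub_eq_add_neg, zpow_add]
      rw [show (z : W) ^ (-(m:ℤ)) = 1 by
        rw [zpow_neg, hz, z_zpow_m cs i i' hM, inv_one], mul_one]
  · -- x = z ^ e * s i'
    set r := e % (m : ℤ) with hr
    have hr0 : 0 ≤ r := Int.emod_nonneg e (by omega)
    have hrm : r < m := Int.emod_lt_of_pos e hm0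
    have hper : x = z ^ r * s i' := by rw [h, hz, z_period cs i i' hM hm e]
    set rn := r.toNat with hrn
    have hrr : (rn : ℤ) = r := Int.toNat_of_nonneg hr0
    have hrnm : rn < m := by omega
    rcases Nat.eq_zero_or_pos rn with h0 | hpos
    · -- r = 0 : x = s i' = alt i i' 1
      refine ⟨1, by omega, i, i', Or.inl ⟨rfl, rfl⟩, ?_⟩
      rw [show (1 : ℕ) = 2 * 0 + 1 from rfl, prod_alt_ii'_odd cs i i', ← hz]
      rw [hper, show r = ((0:ℕ) : ℤ) by omega]
      norm_num
    · rcases le_or_gt (2 * rn) (m + 1) with hle | hgt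
      · -- use alt i' i (2*(rn-1)+1) : z^(1+(rn-1)) s i' = z^rn s i'
        refine ⟨2 * (rn - 1) + 1, by omega, i', i, Or.inr ⟨rfl, rfl⟩, ?_⟩
        rw [prod_alt_i'i_odd cs i i', ← hz]
        rw [hper, show (1 + ((rn - 1 : ℕ) : ℤ)) = r by push_cast; omega]
      · -- use alt i i' (2*(m-rn)+1) : z^(-(m-rn)) s i' = z^(r-m) s i' = z^r s i'
        refine ⟨2 * (m - rn) + 1, by omega, i, i', Or.inl ⟨rfl, rfl⟩, ?_⟩
        rw [prod_alt_ii'_odd cs i i', ← hz]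
        rw [hper]
        congr 1
        rw [show (-((m - rn : ℕ) : ℤ)) = r - m by push_cast; omega]
        rw [sub_eq_add_neg, zpow_add]
        rw [show (z : W) ^ (-(m:ℤ)) = 1 by
          rw [zpow_neg, hz, z_zpow_m cs i i' hM, inv_one], mul_one]

end Dihedral

end AltString

namespace AltString

variable {B W : Type*} [Group W] {M : CoxeterMatrix B} (cs : CoxeterSystem M W)

local prefix:100 "s" => cs.simple
local prefix:100 "π" => cs.wordProd
local prefix:100 "ℓ" => cs.length

lemma alt_letters : ∀ (d : ℕ) (a b c : B), c ∈ CoxeterSystem.alternatingWord a b d →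
    c = a ∨ c = b := by
  intro d
  induction d with
  | zero => intro a b c hc; simp [CoxeterSystem.alternatingWord] at hc
  | succ d ih =>
    intro a b c hc
    rw [CoxeterSystem.alternatingWord_succ, List.concat_eq_append, List.mem_append] at hc
    rcases hc with hc | hc
    · exact (ih b a c hc).symm
    · simp at hc
      exact Or.inr hc

/-- Greedy decomposition: strip off left descents in `{i, i'}`. -/
lemma greedy (i i' : B) : ∀ (n : ℕ) (x : W), ℓ x = n →
    ∃ (g : List B) (v : W), (∀ c ∈ g, c = i ∨ c = i') ∧ x = π g * v ∧ ℓ v ≤ ℓ x ∧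
      ¬cs.IsLeftDescent v i ∧ ¬cs.IsLeftDescent v i' := by
  intro n
  induction n using Nat.strong_induction_on with
  | _ n ih =>
    intro x hx
    by_cases hdi : cs.IsLeftDescent x i
    · have hlt : ℓ (s i * x) < n := by rw [← hx]; exact hdi
      obtain ⟨g, v, hg, hxe, hlv, h1, h2⟩ := ih _ hlt (s i * x) rfl
      refine ⟨i :: g, v, ?_, ?_, ?_, h1, h2⟩
      · intro c hc
        rcases List.mem_cons.mp hc with rfl | hc
        · exact Or.inl rfl
        · exact hg c hc
      · rw [cs.wordProd_cons, mul_assoc, ← hxe, cs.simple_mul_simple_cancel_left]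
      · calc ℓ v ≤ ℓ (s i * x) := hlv
        _ ≤ ℓ x := by omega
    · by_cases hdi' : cs.IsLeftDescent x i'
      · have hlt : ℓ (s i' * x) < n := by rw [← hx]; exact hdi'
        obtain ⟨g, v, hg, hxe, hlv, h1, h2⟩ := ih _ hlt (s i' * x) rfl
        refine ⟨i' :: g, v, ?_, ?_, ?_, h1, h2⟩
        · intro c hc
          rcases List.mem_cons.mp hc with rfl | hc
          · exact Or.inr rfl
          · exact hg c hc
        · rw [cs.wordProd_cons, mul_assoc, ← hxe, cs.simple_mul_simple_cancel_left]
        · calc ℓ v ≤ ℓ (s i' * x) := hlv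
          _ ≤ ℓ x := by omega
      · exact ⟨[], x, by simp, by rw [cs.wordProd_nil, one_mul], le_refl _, hdi, hdi'⟩

lemma not_reduced_concat {ω : List B} (hω : cs.IsReduced ω) (c : B)
    (h : ¬ cs.IsReduced (ω ++ [c])) :
    ∃ p, p < ω.length ∧ π (ω ++ [c]) = π (ω.eraseIdx p) := by
  have hπ : π (ω ++ [c]) = π ω * s c := by
    rw [cs.wordProd_append, cs.wordProd_singleton]
  have hlen : ℓ (π ω * s c) ≠ ω.length + 1 := by
    intro h1
    apply h
    unfold CoxeterSystem.IsReduced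
    rw [hπ, h1, List.length_append, List.length_singleton]
  have hd := cs.length_mul_simple (π ω) c
  have hωl : ℓ (π ω) = ω.length := hω
  have hinv : cs.IsRightInversion (π ω) (s c) := by
    refine ⟨cs.isReflection_simple c, ?_⟩
    omega
  obtain ⟨j, hj, heq⟩ := exists_eraseIdx_of_isRightInversion cs hinv ω rfl
  exact ⟨j, hj, by rw [hπ, heq]⟩

lemma delete_two : ∀ (ω : List B), ¬cs.IsReduced ω →
    ∃ p q, p < q ∧ q < ω.length ∧ π ω = π ((ω.eraseIdx q).eraseIdx p) := by
  intro ω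
  induction ω using List.reverseRecOn with
  | nil =>
    intro h
    exact absurd (by unfold CoxeterSystem.IsReduced; simp : cs.IsReduced ([] : List B)) h
  | append_singleton ω' c ih =>
    intro h
    by_cases hred : cs.IsReduced ω'
    · obtain ⟨p, hp, heq⟩ := not_reduced_concat cs hred c h
      refine ⟨p, ω'.length, hp, by simp, ?_⟩
      have he : (ω' ++ [c]).eraseIdx ω'.length = ω' := by
        rw [List.eraseIdx_append_of_length_le (le_refl _)]
        simp
      rw [he, heq]
    · obtain ⟨p, q, hpq, hq, heq⟩ := ih hred
      refine ⟨p, q, hpq, by simp; omega, ?_⟩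
      have he1 : (ω' ++ [c]).eraseIdx q = ω'.eraseIdx q ++ [c] :=
        List.eraseIdx_append_of_lt_length hq [c]
      have hp2 : p < (ω'.eraseIdx q).length := by
        rw [List.length_eraseIdx]
        simp [hq]
        omega
      have he2 : (ω'.eraseIdx q ++ [c]).eraseIdx p = (ω'.eraseIdx q).eraseIdx p ++ [c] :=
        List.eraseIdx_append_of_lt_length hp2 [c]
      rw [he1, he2, cs.wordProd_append, cs.wordProd_append, heq]

end AltString

namespace AltString

variable {B W : Type*} [Group W] {M : CoxeterMatrix B} (cs : CoxeterSystem M W)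

local prefix:100 "s" => cs.simple
local prefix:100 "π" => cs.wordProd
local prefix:100 "ℓ" => cs.length

lemma master (i i' : B) {m : ℕ} (hM : M.M i i' = m) (hm : 3 ≤ m) :
    ∀ (n : ℕ) (v : W), ℓ v = n → ¬cs.IsLeftDescent v i → ¬cs.IsLeftDescent v i' →
      ∀ (d : ℕ), d ≤ m → ∀ a b : B, ((a = i ∧ b = i') ∨ (a = i' ∧ b = i)) →
      ℓ (π (CoxeterSystem.alternatingWord a b d) * v) = d + ℓ v := by
  intro n
  induction n using Nat.strong_induction_on with
  | _ n ih =>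
  intro v hvn hndi hndi' d hd a b hab
  have hMab : M.M a b = m := by
    rcases hab with ⟨rfl, rfl⟩ | ⟨rfl, rfl⟩
    · exact hM
    · rw [M.symmetric]; exact hM
  have hlenA : ℓ (π (CoxeterSystem.alternatingWord a b d)) = d :=
    length_alt cs (by omega) (by rw [hMab]; omega)
  obtain ⟨ωv, hωvred, hωvprod⟩ := cs.exists_reduced_word v
  have hωvlen : ωv.length = ℓ v := by rw [hωvprod]; exact hωvred.symm
  set A := CoxeterSystem.alternatingWord a b d with hA
  have hAlen : A.length = d := CoxeterSystem.length_alternatingWord a b d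
  have hπω : π (A ++ ωv) = π A * v := by rw [cs.wordProd_append, ← hωvprod]
  by_cases hred : cs.IsReduced (A ++ ωv)
  · have hthis := hred
    unfold CoxeterSystem.IsReduced at hthis
    rw [hπω, List.length_append, hAlen, hωvlen] at hthis
    exact hthis
  · obtain ⟨p, q, hpq, hq, heq⟩ := delete_two cs _ hred
    rw [List.length_append, hAlen] at hq
    rcases lt_or_ge q d with hqd | hqd
    · -- both erasures inside the alternating word: contradiction with reducedness
      exfalso
      have e1 : (A ++ ωv).eraseIdx q = A.eraseIdx q ++ ωv :=
        List.eraseIdx_append_of_lt_length (by rw [hAlen]; exact hqd) _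
      have hh1 : (A.eraseIdx q).length = d - 1 := by
        rw [List.length_eraseIdx, hAlen, if_pos hqd]
      have hpl : p < (A.eraseIdx q).length := by omega
      have e2 : (A.eraseIdx q ++ ωv).eraseIdx p = (A.eraseIdx q).eraseIdx p ++ ωv :=
        List.eraseIdx_append_of_lt_length hpl _
      rw [e1, e2, cs.wordProd_append, cs.wordProd_append, ← hωvprod] at heq
      have hcancel : π A = π ((A.eraseIdx q).eraseIdx p) := mul_right_cancel heq
      have hup : ℓ (π ((A.eraseIdx q).eraseIdx p)) ≤ d - 2 := by
        calc ℓ (π ((A.eraseIdx q).eraseIdx p)) ≤ ((A.eraseIdx q).eraseIdx p).length :=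
          cs.length_wordProd_le _
        _ ≤ d - 2 := by
          rw [List.length_eraseIdx, hh1, if_pos (by omega : p < d - 1)]
          omega
      rw [← hcancel, hlenA] at hup
      omega
    · rcases lt_or_ge p d with hpd | hpd
      · -- mixed case
        have hqv : q - d < ωv.length := by omega
        have e1 := List.eraseIdx_append_of_length_le
          (l := A) (k := q) (by rw [hAlen]; exact hqd) ωv
        rw [hAlen] at e1
        have e2 : (A ++ ωv.eraseIdx (q - d)).eraseIdx p =
            A.eraseIdx p ++ ωv.eraseIdx (q - d) :=
          List.eraseIdx_append_of_lt_length (by rw [hAlen]; exact hpd) _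
        rw [e1, e2, cs.wordProd_append, cs.wordProd_append, ← hωvprod] at heq
        set v₁ := π (ωv.eraseIdx (q - d)) with hv₁
        have hlv₁ : ℓ v₁ ≤ ℓ v - 1 := by
          calc ℓ v₁ ≤ (ωv.eraseIdx (q - d)).length := cs.length_wordProd_le _
          _ ≤ ℓ v - 1 := by
            rw [List.length_eraseIdx, if_pos hqv]
            omega
        have hvpos : 1 ≤ ℓ v := by omega
        have hveq : v = ((π A)⁻¹ * π (A.eraseIdx p)) * v₁ := by
          calc v = (π A)⁻¹ * (π A * v) := by group
          _ = (π A)⁻¹ * (π (A.eraseIdx p) * v₁) := by rw [heq]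
          _ = ((π A)⁻¹ * π (A.eraseIdx p)) * v₁ := by group
        obtain ⟨g₂, v₂, hg₂, hv₁e, hl₂, hnd₂i, hnd₂i'⟩ := greedy cs i i' (ℓ v₁) v₁ rfl
        have hletters : ∀ c ∈ (A.reverse ++ A.eraseIdx p) ++ g₂, c = i ∨ c = i' := by
          intro c hc
          rcases List.mem_append.mp hc with hc | hc
          · have hc' : c ∈ A := by
              rcases List.mem_append.mp hc with hc | hc
              · exact List.mem_reverse.mp hc
              · exact List.Sublist.mem hc (List.eraseIdx_sublist A p)
            have hmem := alt_letters d a b c (hA ▸ hc')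
            rcases hab with ⟨rfl, rfl⟩ | ⟨rfl, rfl⟩
            · exact hmem
            · exact hmem.symm
          · exact hg₂ c hc
        have hveq2 : v = π ((A.reverse ++ A.eraseIdx p) ++ g₂) * v₂ := by
          rw [cs.wordProd_append, cs.wordProd_append, cs.wordProd_reverse, hveq, hv₁e]
          group
        obtain ⟨d₃, hd₃, a₃, b₃, hab₃, hcan⟩ := nf_canonical cs i i' hM hm _
          (word_nf cs i i' _ hletters)
        have hlv₂ : ℓ v₂ < n := by omega
        have hIH := ih (ℓ v₂) (by omega) v₂ rfl hnd₂i hnd₂i' d₃ hd₃ a₃ b₃ hab₃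
        have hveq3 : v = π (CoxeterSystem.alternatingWord a₃ b₃ d₃) * v₂ := by
          rw [hveq2, hcan]
        have hlveq : ℓ v = d₃ + ℓ v₂ := by rw [hveq3, hIH]
        exfalso
        rcases Nat.eq_zero_or_pos d₃ with h0 | hpos3
        · rw [h0] at hlveq
          omega
        · obtain ⟨e, rfl⟩ : ∃ e, d₃ = e + 1 := ⟨d₃ - 1, by omega⟩
          set c₀ := if Even e then b₃ else a₃ with hc₀
          have hsplit : π (CoxeterSystem.alternatingWord a₃ b₃ (e + 1)) =
              s c₀ * π (CoxeterSystem.alternatingWord a₃ b₃ e) := by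
            rw [CoxeterSystem.alternatingWord_succ', cs.wordProd_cons]
          have hIH2 := ih (ℓ v₂) (by omega) v₂ rfl hnd₂i hnd₂i' e (by omega) a₃ b₃ hab₃
          have hstep : s c₀ * v = π (CoxeterSystem.alternatingWord a₃ b₃ e) * v₂ := by
            rw [hveq3, hsplit]
            calc s c₀ * (s c₀ * π (CoxeterSystem.alternatingWord a₃ b₃ e) * v₂)
                = s c₀ * (s c₀ * (π (CoxeterSystem.alternatingWord a₃ b₃ e) * v₂)) := by
                  group
            _ = π (CoxeterSystem.alternatingWord a₃ b₃ e) * v₂ :=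
              cs.simple_mul_simple_cancel_left _
          have hlt : ℓ (s c₀ * v) < ℓ v := by
            rw [hstep, hIH2]
            omega
          have hc₀mem : c₀ = i ∨ c₀ = i' := by
            rw [hc₀]
            rcases hab₃ with ⟨rfl, rfl⟩ | ⟨rfl, rfl⟩
            · split
              · exact Or.inr rfl
              · exact Or.inl rfl
            · split
              · exact Or.inl rfl
              · exact Or.inr rfl
          rcases hc₀mem with hc | hc
          · exact hndi (by rw [← hc]; exact hlt)
          · exact hndi' (by rw [← hc]; exact hlt)
      · -- both erasures inside the word for v: contradiction
        exfalso
        have hqv : q - d < ωv.length := by omega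
        have e1 := List.eraseIdx_append_of_length_le
          (l := A) (k := q) (by rw [hAlen]; exact hqd) ωv
        rw [hAlen] at e1
        have e2 := List.eraseIdx_append_of_length_le
          (l := A) (k := p) (by rw [hAlen]; exact hpd) (ωv.eraseIdx (q - d))
        rw [hAlen] at e2
        rw [e1, e2, cs.wordProd_append, cs.wordProd_append, ← hωvprod] at heq
        have hcc : v = π ((ωv.eraseIdx (q - d)).eraseIdx (p - d)) := mul_left_cancel heq
        have hh1 : (ωv.eraseIdx (q - d)).length = ℓ v - 1 := by
          rw [List.length_eraseIdx, if_pos hqv]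
          omega
        have hbound : ℓ v ≤ ℓ v - 2 := by
          calc ℓ v = ℓ (π ((ωv.eraseIdx (q - d)).eraseIdx (p - d))) := by rw [← hcc]
          _ ≤ ((ωv.eraseIdx (q - d)).eraseIdx (p - d)).length := cs.length_wordProd_le _
          _ ≤ ℓ v - 2 := by
            rw [List.length_eraseIdx]
            split
            · omega
            · omega
        omega

end AltString

/-- Let `(W,S)` be a Coxeter system, `r = s_i`, `t = s_{i'}` simple
reflections with `rt` of order `m ≥ 3`, and `w ∈ W` with `ℓ(rw) > ℓ(w)`, `ℓ(tw) > ℓ(w)`.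
Then the `m−1` elements `rw, trw, rtrw, ...` (the `k`-th being the product of the
alternating word of length `k` ending in `i` with `w`) have strictly increasing lengths
`ℓ(w)+1, ..., ℓ(w)+m−1`, and in particular are pairwise distinct. -/
theorem alternating_left_string_lengths {B W : Type*} [Group W] {M : CoxeterMatrix B}
    (cs : CoxeterSystem M W) (i i' : B) (m : ℕ) (hM : M i i' = m) (hm : 3 ≤ m)
    (w : W)
    (hiw : cs.length w < cs.length (cs.simple i * w))
    (hi'w : cs.length w < cs.length (cs.simple i' * w)) :
    (∀ k, 1 ≤ k → k ≤ m - 1 →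
      cs.length (cs.wordProd (alternatingWord i' i k) * w) = cs.length w + k) ∧
    ∀ k l, 1 ≤ k → k ≤ m - 1 → 1 ≤ l → l ≤ m - 1 → k ≠ l →
      cs.wordProd (alternatingWord i' i k) * w ≠ cs.wordProd (alternatingWord i' i l) * w := by

  have hM' : M.M i i' = m := hM
  have hndi : ¬cs.IsLeftDescent w i := by
    unfold CoxeterSystem.IsLeftDescent
    omega
  have hndi' : ¬cs.IsLeftDescent w i' := by
    unfold CoxeterSystem.IsLeftDescent
    omega
  have hmain : ∀ k, k ≤ m - 1 →
      cs.length (cs.wordProd (CoxeterSystem.alternatingWord i' i k) * w) = cs.length w + k := by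
    intro k hk
    have := AltString.master cs i i' hM' hm (cs.length w) w rfl hndi hndi' k (by omega) i' i
      (Or.inr ⟨rfl, rfl⟩)
    omega
  constructor
  · intro k _ hk
    exact hmain k hk
  · intro k l _ hk2 _ hl2 hkl heq
    apply hkl
    have h1 := hmain k hk2
    have h2 := hmain l hl2
    rw [heq] at h1
    omega
end

section
/- Define operators X, Y on the free Z-module with basis {e_{(i,j)} : i,j ∈ N} by X e_{(i,j)} = e_{(i+1,j)} + e_{(i+1,j−1)} + e_{(i−1,j+1)} + e_{(i−1,j)} and Y e_{(i,j)} = e_{(i,j+1)} + e_{(i+2,j−1)} + (1−δ_{0,i}) e_{(i,j)} + e_{(i−2,j+1)} + e_{(i,j−1)}, with e_{(a,b)} = 0 for a < 0 or b < 0. Then X and Y commute: XY = YX. -/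
/-- The basis element `e_{(a,b)}` of the free ℤ-module on `ℕ × ℕ`, with the convention
`e_{(a,b)} = 0` whenever `a < 0` or `b < 0`. -/
noncomputable def eVec (a b : ℤ) : (ℕ × ℕ) →₀ ℤ :=
  if 0 ≤ a ∧ 0 ≤ b then Finsupp.single (a.toNat, b.toNat) 1 else 0

/-- The operator `X`: `X e_{(i,j)} = e_{(i+1,j)} + e_{(i+1,j−1)} + e_{(i−1,j+1)} + e_{(i−1,j)}`. -/
noncomputable def Xop : ((ℕ × ℕ) →₀ ℤ) →ₗ[ℤ] ((ℕ × ℕ) →₀ ℤ) :=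
  Finsupp.lift _ ℤ (ℕ × ℕ) fun p =>
    eVec ((p.1 : ℤ) + 1) p.2 + eVec ((p.1 : ℤ) + 1) ((p.2 : ℤ) - 1) +
      eVec ((p.1 : ℤ) - 1) ((p.2 : ℤ) + 1) + eVec ((p.1 : ℤ) - 1) p.2

/-- The operator `Y`:
`Y e_{(i,j)} = e_{(i,j+1)} + e_{(i+2,j−1)} + (1−δ_{0,i}) e_{(i,j)} + e_{(i−2,j+1)} + e_{(i,j−1)}`. -/
noncomputable def Yop : ((ℕ × ℕ) →₀ ℤ) →ₗ[ℤ] ((ℕ × ℕ) →₀ ℤ) :=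
  Finsupp.lift _ ℤ (ℕ × ℕ) fun p =>
    eVec p.1 ((p.2 : ℤ) + 1) + eVec ((p.1 : ℤ) + 2) ((p.2 : ℤ) - 1) +
      (if p.1 = 0 then 0 else eVec p.1 p.2) +
      eVec ((p.1 : ℤ) - 2) ((p.2 : ℤ) + 1) + eVec p.1 ((p.2 : ℤ) - 1)

/-!
In the coordinates `(i, j)` of a dominant weight `λ = i ω₁ + j ω₂` of `Sp(4)`, `X` and `Y` are
tensoring with the fundamental representations of dimensions 4 and 5, written in the basis of
irreducibles. The map `e_λ ↦ A_{λ+ρ}` to Weyl numerators embeds the module into the Laurent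
polynomials `ℤ[ℤ × ℤ]`, and by the Brauer–Klimyk rule `χ_V · A_μ = ∑_{ν ∈ wt V} A_{μ+ν}` it turns
`X` and `Y` into multiplication by the two fundamental characters, which commute. The truncation
`e_{(a,b)} = 0` and the factor `1 - δ_{0,i}` are the straightening of this rule: `A_μ` vanishes on
the walls, and for `i = 0` the weight of `e_{(-2, j+1)}` reflects to that of `e_{(0, j)}` with sign
`-1`.
-/

open AddMonoidAlgebra

section Antisymmetrization

variable {k G : Type*} [Ring k] [AddMonoid G]

noncomputable def antisymmetrization (g : G →+ G) : k[G] →+ k[G] :=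
  AddMonoidHom.id _ - (mapDomainRingHom k g).toAddMonoidHom

theorem antisymmetrization_mul_of_invariant {g : G →+ G} {χ : k[G]} (hχ : mapDomain g χ = χ)
    (f : k[G]) : antisymmetrization g (χ * f) = χ * antisymmetrization g f := by
  simp [antisymmetrization, mapDomain_mul, hχ, mul_sub]

theorem antisymmetrization_single (g : G →+ G) (μ : G) (c : k) :
    antisymmetrization g (single μ c) = single μ c - single (g μ) c := by
  simp [antisymmetrization, mapDomain_single]

end Antisymmetrization

def swapHom : ℤ × ℤ →+ ℤ × ℤ := AddMonoidHom.mk' (fun μ => (μ.2, μ.1)) fun _ _ => rfl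
def negFst : ℤ × ℤ →+ ℤ × ℤ := AddMonoidHom.mk' (fun μ => (-μ.1, μ.2)) fun _ _ => by simp [add_comm]
def negSnd : ℤ × ℤ →+ ℤ × ℤ := AddMonoidHom.mk' (fun μ => (μ.1, -μ.2)) fun _ _ => by simp [add_comm]

@[simp] theorem swapHom_apply (x y : ℤ) : swapHom (x, y) = (y, x) := rfl
@[simp] theorem negFst_apply (x y : ℤ) : negFst (x, y) = (-x, y) := rfl
@[simp] theorem negSnd_apply (x y : ℤ) : negSnd (x, y) = (x, -y) := rfl

/-- The Weyl group of `C₂` acts on `ε`-coordinates by signed permutations, and its alternating sum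
`∑ sign(w) w` factors as `(1 - swap)(1 - negFst)(1 - negSnd)`. -/
noncomputable def weylAntisymmetrization : ℤ[ℤ × ℤ] →+ ℤ[ℤ × ℤ] :=
  (antisymmetrization swapHom).comp ((antisymmetrization negFst).comp (antisymmetrization negSnd))

noncomputable def weylNumerator (μ : ℤ × ℤ) : ℤ[ℤ × ℤ] := weylAntisymmetrization (single μ 1)

theorem weylNumerator_eq (x y : ℤ) : weylNumerator (x, y) =
    single (x, y) 1 - single (x, -y) 1 - single (-x, y) 1 + single (-x, -y) 1 -
      (single (y, x) 1 - single (y, -x) 1 - single (-y, x) 1 + single (-y, -x) 1) := by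
  simp only [weylNumerator, weylAntisymmetrization, AddMonoidHom.comp_apply,
    antisymmetrization_single, map_sub, swapHom_apply, negFst_apply, negSnd_apply]
  abel

theorem weylNumerator_swap (x y : ℤ) : weylNumerator (y, x) = -weylNumerator (x, y) := by
  rw [weylNumerator_eq, weylNumerator_eq]; abel

theorem weylNumerator_self (x : ℤ) : weylNumerator (x, x) = 0 := by
  rw [weylNumerator_eq]; abel

theorem weylNumerator_zero_right (x : ℤ) : weylNumerator (x, 0) = 0 := by
  rw [weylNumerator_eq, neg_zero]; abel

theorem coeff_weylNumerator {x y x' y' : ℤ} (h : 0 < y ∧ y < x) (h' : 0 < y' ∧ y' < x') :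
    (weylNumerator (x, y)).coeff (x', y') = if x = x' ∧ y = y' then 1 else 0 := by
  rw [weylNumerator_eq]
  simp only [coeff_add, coeff_sub, coeff_single, Finsupp.add_apply, Finsupp.sub_apply,
    Finsupp.single_apply, Prod.mk.injEq]
  split_ifs <;> omega

def IsWeylInvariant (χ : ℤ[ℤ × ℤ]) : Prop :=
  mapDomain swapHom χ = χ ∧ mapDomain negFst χ = χ ∧ mapDomain negSnd χ = χ

theorem IsWeylInvariant.mul_weylNumerator {χ : ℤ[ℤ × ℤ]} (hχ : IsWeylInvariant χ) (μ : ℤ × ℤ) :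
    χ * weylNumerator μ = weylAntisymmetrization (χ * single μ 1) := by
  obtain ⟨hswap, hfst, hsnd⟩ := hχ
  simp only [weylNumerator, weylAntisymmetrization, AddMonoidHom.comp_apply,
    antisymmetrization_mul_of_invariant hswap, antisymmetrization_mul_of_invariant hfst,
    antisymmetrization_mul_of_invariant hsnd]

/-- The characters of the fundamental representations of `Sp(4)`, with weights `±ε₁, ±ε₂` and
`±ε₁ ± ε₂, 0`. -/
noncomputable def fundChar₁ : ℤ[ℤ × ℤ] :=
  single (1, 0) 1 + single (-1, 0) 1 + single (0, 1) 1 + single (0, -1) 1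

noncomputable def fundChar₂ : ℤ[ℤ × ℤ] :=
  single (1, 1) 1 + single (1, -1) 1 + single (-1, 1) 1 + single (-1, -1) 1 + single (0, 0) 1

theorem isWeylInvariant_fundChar₁ : IsWeylInvariant fundChar₁ := by
  refine ⟨?_, ?_, ?_⟩ <;>
    simp only [fundChar₁, mapDomain_add, mapDomain_single, swapHom_apply, negFst_apply,
      negSnd_apply, neg_neg, neg_zero] <;> abel

theorem isWeylInvariant_fundChar₂ : IsWeylInvariant fundChar₂ := by
  refine ⟨?_, ?_, ?_⟩ <;>
    simp only [fundChar₂, mapDomain_add, mapDomain_single, swapHom_apply, negFst_apply,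
      negSnd_apply, neg_neg, neg_zero] <;> abel

theorem fundChar₁_mul_weylNumerator (x y : ℤ) : fundChar₁ * weylNumerator (x, y) =
    weylNumerator (x + 1, y) + weylNumerator (x - 1, y) + weylNumerator (x, y + 1) +
      weylNumerator (x, y - 1) := by
  rw [isWeylInvariant_fundChar₁.mul_weylNumerator]
  simp [fundChar₁, add_mul, single_mul_single, weylNumerator, sub_eq_add_neg, add_comm]

theorem fundChar₂_mul_weylNumerator (x y : ℤ) : fundChar₂ * weylNumerator (x, y) =
    weylNumerator (x + 1, y + 1) + weylNumerator (x + 1, y - 1) + weylNumerator (x - 1, y + 1) +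
      weylNumerator (x - 1, y - 1) + weylNumerator (x, y) := by
  rw [isWeylInvariant_fundChar₂.mul_weylNumerator]
  simp [fundChar₂, add_mul, single_mul_single, weylNumerator, sub_eq_add_neg, add_comm]

/-- `λ + ρ` in `ε`-coordinates, where `ω₁ = ε₁`, `ω₂ = ε₁ + ε₂` and `ρ = 2ε₁ + ε₂`; it is a
bijection onto the regular dominant chamber `x > y > 0`. -/
def rhoShift (p : ℕ × ℕ) : ℤ × ℤ := ((p.1 : ℤ) + p.2 + 2, (p.2 : ℤ) + 1)

noncomputable def toAlternant : ((ℕ × ℕ) →₀ ℤ) →ₗ[ℤ] ℤ[ℤ × ℤ] :=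
  Finsupp.lift _ ℤ (ℕ × ℕ) fun p => weylNumerator (rhoShift p)

theorem toAlternant_single (p : ℕ × ℕ) (c : ℤ) :
    toAlternant (Finsupp.single p c) = c • weylNumerator (rhoShift p) := by
  simp [toAlternant]

theorem toAlternant_eVec {a b : ℤ} (ha : -1 ≤ a) (hb : -1 ≤ b) :
    toAlternant (eVec a b) = weylNumerator (a + b + 2, b + 1) := by
  by_cases h : 0 ≤ a ∧ 0 ≤ b
  · lift a to ℕ using h.1
    lift b to ℕ using h.2
    simp [eVec, toAlternant_single, rhoShift]
  · rw [eVec, if_neg h, map_zero]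
    rcases (show a = -1 ∨ b = -1 by omega) with rfl | rfl
    · rw [show -1 + b + 2 = b + 1 by ring, weylNumerator_self]
    · rw [neg_add_cancel, weylNumerator_zero_right]

theorem coeff_toAlternant_rhoShift (f : (ℕ × ℕ) →₀ ℤ) (q : ℕ × ℕ) :
    (toAlternant f).coeff (rhoShift q) = f q := by
  induction f using Finsupp.induction_linear with
  | zero => simp
  | add f g hf hg => simp [hf, hg]
  | single p c =>
    rw [toAlternant_single, coeff_smul, Finsupp.smul_apply, rhoShift, rhoShift,
      coeff_weylNumerator (by omega) (by omega), Finsupp.single_apply]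
    simp only [smul_eq_mul, Prod.ext_iff]
    split_ifs <;> omega

theorem toAlternant_injective : Function.Injective toAlternant := fun f g h =>
  Finsupp.ext fun q => by rw [← coeff_toAlternant_rhoShift, h, coeff_toAlternant_rhoShift]

theorem toAlternant_Xop_single (i j : ℕ) :
    toAlternant (Xop (Finsupp.single (i, j) 1)) =
      fundChar₁ * toAlternant (Finsupp.single (i, j) 1) := by
  simp only [Xop, Finsupp.lift_apply, Finsupp.sum_single_index, map_add, zero_smul, one_smul,
    toAlternant_single]
  rw [toAlternant_eVec (by omega) (by omega), toAlternant_eVec (by omega) (by omega),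
    toAlternant_eVec (by omega) (by omega), toAlternant_eVec (by omega) (by omega),
    rhoShift, fundChar₁_mul_weylNumerator]
  ring_nf

theorem toAlternant_Yop_single (i j : ℕ) :
    toAlternant (Yop (Finsupp.single (i, j) 1)) =
      fundChar₂ * toAlternant (Finsupp.single (i, j) 1) := by
  simp only [Yop, Finsupp.lift_apply, Finsupp.sum_single_index, map_add, zero_smul, one_smul,
    toAlternant_single, rhoShift, fundChar₂_mul_weylNumerator]
  rcases Nat.eq_zero_or_pos i with rfl | hi
  · have hwall : eVec ((0 : ℕ) - 2 : ℤ) ((j : ℤ) + 1) = 0 := if_neg (by omega)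
    simp only [if_true, hwall, map_zero]
    rw [toAlternant_eVec (by omega) (by omega), toAlternant_eVec (by omega) (by omega),
      toAlternant_eVec (by omega) (by omega)]
    have hcancel : weylNumerator (((0 : ℕ) : ℤ) + j + 2 - 1, (j : ℤ) + 1 + 1) =
        -weylNumerator (((0 : ℕ) : ℤ) + j + 2, (j : ℤ) + 1) := by
      rw [← weylNumerator_swap]; ring_nf
    rw [hcancel]
    ring_nf
  · rw [if_neg hi.ne', toAlternant_eVec (by omega) (by omega),
      toAlternant_eVec (by omega) (by omega), toAlternant_eVec (by omega) (by omega),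
      toAlternant_eVec (by omega) (by omega), toAlternant_eVec (by omega) (by omega)]
    ring_nf

theorem toAlternant_Xop (f : (ℕ × ℕ) →₀ ℤ) : toAlternant (Xop f) = fundChar₁ * toAlternant f := by
  have h : toAlternant ∘ₗ Xop = LinearMap.mulLeft ℤ fundChar₁ ∘ₗ toAlternant :=
    Finsupp.lhom_ext' fun ⟨i, j⟩ => LinearMap.ext_ring (toAlternant_Xop_single i j)
  exact LinearMap.congr_fun h f

theorem toAlternant_Yop (f : (ℕ × ℕ) →₀ ℤ) : toAlternant (Yop f) = fundChar₂ * toAlternant f := by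
  have h : toAlternant ∘ₗ Yop = LinearMap.mulLeft ℤ fundChar₂ ∘ₗ toAlternant :=
    Finsupp.lhom_ext' fun ⟨i, j⟩ => LinearMap.ext_ring (toAlternant_Yop_single i j)
  exact LinearMap.congr_fun h f

/-- The operators `X` and `Y` on the free ℤ-module with basis
`{e_{(i,j)} : i,j ∈ ℕ}` commute: `XY = YX`. -/
theorem Xop_Yop_comm : Xop ∘ₗ Yop = Yop ∘ₗ Xop :=
  LinearMap.ext fun f => toAlternant_injective <| by
    simp only [LinearMap.comp_apply, toAlternant_Xop, toAlternant_Yop, mul_left_comm]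
end
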